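/- arXiv:0809.0849 — 8 statements merged into one kernel-verified Lean document; each statement's English description precedes it below -/
import Mathlib

section
/- Let φ : (0,∞) → [0,∞) be integrable and monotone decreasing, and suppose that for some β ∈ [0,1] one has limsup_{u→0⁺} φ(u)·u^β < ∞. Then there exists a constant c < ∞, independent of x, such that for all x > 0, |∫₀^∞ cos(ux) φ(u) du| ≤ c·x^{β−1} and |∫₀^∞ sin(ux) φ(u) du| ≤ c·x^{β−1}. -/
/-!
Write `T = π / x`, an antiperiod of `u ↦ cos (u x)` and of `u ↦ sin (u x)`. For a kernel `k`
with `|k| ≤ 1` and `k (u + T) = - k u`, shifting `∫_T^∞ k φ` back by `T` gives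
`2 ∫₀^∞ k φ = ∫₀^T k φ + ∫₀^∞ k(u) (φ u - φ (u + T)) du`. Because `φ` is nonnegative and
decreasing, both integrands are dominated by nonnegative functions of total mass `∫₀^T φ`, so the
oscillatory integral is at most `∫₀^T φ`. Near `0` the hypothesis gives `φ u ≤ C u^{-β}`, hence
`∫₀^T φ ≤ c T^{1-β} = c π^{1-β} x^{β-1}`; for `β = 1`, or for large `T`, the total mass
`∫₀^∞ φ` already suffices.
-/

open MeasureTheory Real Set Filter Topology

section Shift

variable {E : Type*} [NormedAddCommGroup E]

theorem setIntegral_Ioi_comp_add_right [NormedSpace ℝ E] (f : ℝ → E) (a d : ℝ) :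
    ∫ u in Ioi a, f (u + d) = ∫ u in Ioi (a + d), f u := by
  have := (measurePreserving_add_right volume d).setIntegral_preimage_emb
    (MeasurableEquiv.addRight d).measurableEmbedding f (Ioi (a + d))
  rwa [preimage_add_const_Ioi, add_sub_cancel_right] at this

theorem IntegrableOn.comp_add_right_Ioi {f : ℝ → E} {a d : ℝ}
    (hf : IntegrableOn f (Ioi (a + d))) : IntegrableOn (fun u => f (u + d)) (Ioi a) := by
  have := ((measurePreserving_add_right volume d).integrableOn_comp_preimage
    (MeasurableEquiv.addRight d).measurableEmbedding).2 hf
  rwa [preimage_add_const_Ioi, add_sub_cancel_right] at this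

end Shift

theorem norm_mul_le_of_abs_le_one {a b : ℝ} (ha : |a| ≤ 1) (hb : 0 ≤ b) : ‖a * b‖ ≤ b := by
  rw [norm_mul, Real.norm_of_nonneg hb]
  exact mul_le_of_le_one_left hb ha

section Oscillation

variable {φ : ℝ → ℝ} {T : ℝ}

theorem integral_Ioi_sub_comp_add_right (hint : IntegrableOn φ (Ioi 0)) (hT : 0 ≤ T) :
    ∫ u in Ioi 0, (φ u - φ (u + T)) = ∫ u in 0..T, φ u := by
  have hshift : IntegrableOn (fun u => φ (u + T)) (Ioi 0) :=
    IntegrableOn.comp_add_right_Ioi (hint.mono_set (Ioi_subset_Ioi (by simpa using hT)))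
  rw [integral_sub hint hshift, setIntegral_Ioi_comp_add_right, zero_add,
    ← intervalIntegral.integral_interval_add_Ioi hint (hint.mono_set (Ioi_subset_Ioi hT))]
  ring

theorem abs_integral_Ioi_mul_le_of_antiperiodic {k : ℝ → ℝ} (hT : 0 ≤ T)
    (hk : AEStronglyMeasurable k) (hk1 : ∀ u, |k u| ≤ 1) (hkT : Function.Antiperiodic k T)
    (hpos : ∀ u ∈ Ioi (0:ℝ), 0 ≤ φ u) (hint : IntegrableOn φ (Ioi 0))
    (hanti : AntitoneOn φ (Ioi 0)) :
    |∫ u in Ioi 0, k u * φ u| ≤ ∫ u in 0..T, φ u := by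
  have hmul : ∀ {s : Set ℝ} {g : ℝ → ℝ}, IntegrableOn g s → IntegrableOn (fun u => k u * g u) s :=
    fun hg => hg.bdd_mul hk.restrict (Eventually.of_forall fun u => hk1 u)
  have hshift : IntegrableOn (fun u => φ (u + T)) (Ioi 0) :=
    IntegrableOn.comp_add_right_Ioi (hint.mono_set (Ioi_subset_Ioi (by simpa using hT)))
  have hdecr : ∀ u ∈ Ioi (0:ℝ), 0 ≤ φ u - φ (u + T) := fun u hu =>
    sub_nonneg.2 (hanti hu (mem_Ioi.2 (by linarith [mem_Ioi.1 hu])) (by linarith))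
  have htail : ∫ u in Ioi T, k u * φ u = -∫ u in Ioi 0, k u * φ (u + T) := by
    rw [← zero_add T, ← setIntegral_Ioi_comp_add_right, zero_add, ← integral_neg]
    refine setIntegral_congr_fun measurableSet_Ioi fun u _ => ?_
    simp only [hkT u, neg_mul]
  have htwice : 2 * ∫ u in Ioi 0, k u * φ u
      = (∫ u in 0..T, k u * φ u) + ∫ u in Ioi 0, k u * (φ u - φ (u + T)) := by
    have hsplit := intervalIntegral.integral_interval_add_Ioi (hmul hint)
      (hmul (hint.mono_set (Ioi_subset_Ioi hT)))
    simp only [mul_sub]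
    rw [integral_sub (hmul hint) (hmul hshift), ← hsplit, htail]
    ring
  have hhead : |∫ u in 0..T, k u * φ u| ≤ ∫ u in 0..T, φ u :=
    intervalIntegral.norm_integral_le_of_norm_le hT
      (Eventually.of_forall fun u hu => norm_mul_le_of_abs_le_one (hk1 u) (hpos u hu.1))
      ((intervalIntegrable_iff_integrableOn_Ioc_of_le hT).2 (hint.mono_set Ioc_subset_Ioi_self))
  have hdiff : |∫ u in Ioi 0, k u * (φ u - φ (u + T))| ≤ ∫ u in 0..T, φ u := by
    rw [← integral_Ioi_sub_comp_add_right hint hT]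
    exact norm_integral_le_of_norm_le (hint.sub hshift) <|
      (ae_restrict_mem measurableSet_Ioi).mono fun u hu =>
        norm_mul_le_of_abs_le_one (hk1 u) (hdecr u hu)
  have := abs_add_le (∫ u in 0..T, k u * φ u) (∫ u in Ioi 0, k u * (φ u - φ (u + T)))
  rw [← htwice, abs_mul, abs_two] at this
  linarith

end Oscillation

section Head

variable {φ : ℝ → ℝ} {β : ℝ}

theorem intervalIntegral_le_of_le_mul_rpow_neg {C b : ℝ} (hβ : β < 1) (hb : 0 ≤ b)
    (hint : IntegrableOn φ (Ioc 0 b)) (hφ : ∀ u ∈ Ioc 0 b, φ u ≤ C * u ^ (-β)) :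
    ∫ u in 0..b, φ u ≤ C / (1 - β) * b ^ (1 - β) := by
  have hrpow : IntervalIntegrable (fun u : ℝ => C * u ^ (-β)) volume 0 b :=
    (intervalIntegral.intervalIntegrable_rpow' (by linarith)).const_mul C
  calc ∫ u in 0..b, φ u ≤ ∫ u in 0..b, C * u ^ (-β) :=
        intervalIntegral.integral_mono_on_of_le_Ioo hb
          ((intervalIntegrable_iff_integrableOn_Ioc_of_le hb).2 hint) hrpow
          fun u hu => hφ u (Ioo_subset_Ioc_self hu)
    _ = C / (1 - β) * b ^ (1 - β) := by
        rw [intervalIntegral.integral_const_mul, integral_rpow (Or.inl (by linarith)),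
          zero_rpow (by linarith), neg_add_eq_sub]
        ring

theorem intervalIntegral_le_setIntegral_Ioi {b : ℝ} (hb : 0 ≤ b)
    (hpos : ∀ u ∈ Ioi (0:ℝ), 0 ≤ φ u) (hint : IntegrableOn φ (Ioi 0)) :
    ∫ u in 0..b, φ u ≤ ∫ u in Ioi 0, φ u := by
  rw [intervalIntegral.integral_of_le hb]
  exact setIntegral_mono_set hint ((ae_restrict_mem measurableSet_Ioi).mono hpos)
    Ioc_subset_Ioi_self.eventuallyLE

theorem exists_intervalIntegral_le_mul_rpow (hβ1 : β ≤ 1)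
    (hpos : ∀ u ∈ Ioi (0:ℝ), 0 ≤ φ u) (hint : IntegrableOn φ (Ioi 0))
    (hlimsup : IsBoundedUnder (· ≤ ·) (𝓝[>] (0:ℝ)) (fun u => φ u * u ^ β)) :
    ∃ c, ∀ b, 0 < b → ∫ u in 0..b, φ u ≤ c * b ^ (1 - β) := by
  set M := ∫ u in Ioi 0, φ u
  have hM : 0 ≤ M := setIntegral_nonneg measurableSet_Ioi hpos
  rcases hβ1.eq_or_lt with rfl | hβ
  · exact ⟨M, fun b hb => by
      simpa using intervalIntegral_le_setIntegral_Ioi hb.le hpos hint⟩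
  obtain ⟨C, hC⟩ := hlimsup
  obtain ⟨ε, hε, hCε⟩ := (nhdsGT_basis (0:ℝ)).eventually_iff.1 hC
  refine ⟨max (C / (1 - β)) (M * ε ^ (β - 1)), fun b hb => ?_⟩
  have hbβ : 0 ≤ b ^ (1 - β) := rpow_nonneg hb.le _
  rcases lt_or_ge b ε with hbε | hεb
  · have hφ : ∀ u ∈ Ioc 0 b, φ u ≤ C * u ^ (-β) := fun u hu => by
      rw [rpow_neg hu.1.le, le_mul_inv_iff₀ (rpow_pos_of_pos hu.1 β)]
      exact hCε ⟨hu.1, hu.2.trans_lt hbε⟩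
    calc ∫ u in 0..b, φ u ≤ C / (1 - β) * b ^ (1 - β) :=
          intervalIntegral_le_of_le_mul_rpow_neg hβ hb.le
            (hint.mono_set Ioc_subset_Ioi_self) hφ
      _ ≤ _ := mul_le_mul_of_nonneg_right (le_max_left _ _) hbβ
  · have hεβ : ε ^ (β - 1) * ε ^ (1 - β) = 1 := by
      rw [← rpow_add hε]; norm_num
    calc ∫ u in 0..b, φ u ≤ M := intervalIntegral_le_setIntegral_Ioi hb.le hpos hint
      _ = M * ε ^ (β - 1) * ε ^ (1 - β) := by rw [mul_assoc, hεβ, mul_one]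
      _ ≤ M * ε ^ (β - 1) * b ^ (1 - β) := by gcongr
      _ ≤ _ := mul_le_mul_of_nonneg_right (le_max_right _ _) hbβ

end Head

theorem smalltime_lemma51_i_general (φ : ℝ → ℝ)
    (hpos : ∀ u ∈ Ioi (0:ℝ), 0 ≤ φ u)
    (hint : IntegrableOn φ (Ioi 0))
    (hanti : AntitoneOn φ (Ioi 0))
    (β : ℝ) (hβ1 : β ≤ 1)
    (hlimsup : IsBoundedUnder (· ≤ ·) (𝓝[>] (0:ℝ)) (fun u => φ u * u ^ β)) :
    ∃ c : ℝ, ∀ x : ℝ, 0 < x →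
      |∫ u in Ioi (0:ℝ), Real.cos (u * x) * φ u| ≤ c * x ^ (β - 1) ∧
      |∫ u in Ioi (0:ℝ), Real.sin (u * x) * φ u| ≤ c * x ^ (β - 1) := by
  obtain ⟨c, hc⟩ := exists_intervalIntegral_le_mul_rpow hβ1 hpos hint hlimsup
  refine ⟨c * π ^ (1 - β), fun x hx => ?_⟩
  have hT : 0 ≤ π / x := by positivity
  have hhead : ∫ u in 0..π / x, φ u ≤ c * π ^ (1 - β) * x ^ (β - 1) := by
    calc ∫ u in 0..π / x, φ u ≤ c * (π / x) ^ (1 - β) := hc _ (by positivity)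
      _ = c * π ^ (1 - β) * x ^ (β - 1) := by
          rw [div_rpow pi_pos.le hx.le, div_eq_mul_inv, ← rpow_neg hx.le, neg_sub, mul_assoc]
  constructor
  · exact (abs_integral_Ioi_mul_le_of_antiperiodic hT (by fun_prop) (fun _ => abs_cos_le_one _)
      (cos_antiperiodic.mul_const' hx.ne') hpos hint hanti).trans hhead
  · exact (abs_integral_Ioi_mul_le_of_antiperiodic hT (by fun_prop) (fun _ => abs_sin_le_one _)
      (sin_antiperiodic.mul_const' hx.ne') hpos hint hanti).trans hhead

theorem smalltime_lemma51_i (φ : ℝ → ℝ)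
    (hpos : ∀ u ∈ Ioi (0:ℝ), 0 ≤ φ u)
    (hint : IntegrableOn φ (Ioi 0))
    (hanti : AntitoneOn φ (Ioi 0))
    (β : ℝ) (hβ0 : 0 ≤ β) (hβ1 : β ≤ 1)
    (hlimsup : IsBoundedUnder (· ≤ ·) (𝓝[>] (0:ℝ)) (fun u => φ u * u ^ β)) :
    ∃ c : ℝ, ∀ x : ℝ, 0 < x →
      |∫ u in Ioi (0:ℝ), Real.cos (u * x) * φ u| ≤ c * x ^ (β - 1) ∧
      |∫ u in Ioi (0:ℝ), Real.sin (u * x) * φ u| ≤ c * x ^ (β - 1) :=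
  smalltime_lemma51_i_general φ hpos hint hanti β hβ1 hlimsup
end

section
/- Let φ : (0,∞) → [0,∞) be integrable and monotone decreasing. Then for every x > 0, 0 ≤ ∫₀^∞ sin(ux) φ(u) du ≤ ∫₀^{π/x} φ(u) du. -/
open MeasureTheory Real Set

/-!
Cut `(0, ∞)` into the half-periods `(nπ/x, (n+1)π/x]` of `u ↦ sin (u x)`. Translated back to
`(0, π/x]`, the integral over the `n`-th one is `(-1)ⁿ bₙ` with
`bₙ = ∫₀^{π/x} sin (u x) φ (u + nπ/x) du`, and `bₙ` is antitone in `n` since `φ` is antitone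
and `sin (u x) ≥ 0` there. So the integral is the sum of an alternating series with antitone
terms, which lies between `0` and its first term `b₀ ≤ ∫₀^{π/x} φ`.
-/

section IntervalDecomposition

variable {E : Type*} [NormedAddCommGroup E]

theorem integrableOn_Ioc_comp_add_right {g : ℝ → E} {a b c : ℝ} :
    IntegrableOn (fun u => g (u + c)) (Ioc a b) ↔ IntegrableOn g (Ioc (a + c) (b + c)) := by
  simpa [Function.comp_def] using
    (measurePreserving_add_right volume c).integrableOn_comp_preimage
      (measurableEmbedding_addRight c) (f := g) (s := Ioc (a + c) (b + c))

variable [NormedSpace ℝ E]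

theorem setIntegral_Ioc_comp_add_right (g : ℝ → E) (a b c : ℝ) :
    ∫ u in Ioc a b, g (u + c) = ∫ u in Ioc (a + c) (b + c), g u := by
  simpa using (measurePreserving_add_right volume c).setIntegral_preimage_emb
    (measurableEmbedding_addRight c) g (Ioc (a + c) (b + c))

theorem hasSum_setIntegral_Ioc_map_succ {f : ℕ → ℝ} (hf : Monotone f)
    (hf_unbdd : ¬BddAbove (range f)) {g : ℝ → E} (hg : IntegrableOn g (Ioi (f 0))) :
    HasSum (fun n => ∫ u in Ioc (f n) (f (n + 1)), g u) (∫ u in Ioi (f 0), g u) := by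
  have hcover : ⋃ n, Ioc (f n) (f (n + 1)) = Ioi (f 0) :=
    iUnion_Ioc_map_succ_eq_Ioi (fun n => hf n.zero_le) hf_unbdd
  rw [← hcover] at hg ⊢
  exact hasSum_integral_iUnion (fun _ => measurableSet_Ioc) hf.pairwise_disjoint_on_Ioc_succ hg

end IntervalDecomposition

section Alternating

variable {E : Type*} [Ring E] [PartialOrder E] [IsOrderedRing E] [TopologicalSpace E]
  [OrderClosedTopology E]

theorem HasSum.nonneg_and_le_of_alternating_of_antitone {b : ℕ → E} {s : E}
    (hs : HasSum (fun n => (-1) ^ n * b n) s) (hb : Antitone b) : 0 ≤ s ∧ s ≤ b 0 := by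
  have h := hs.tendsto_sum_nat
  exact ⟨by simpa using hb.alternating_series_le_tendsto h 0,
    by simpa using hb.tendsto_le_alternating_series h 0⟩

end Alternating

theorem MeasureTheory.IntegrableOn.sin_mul {φ : ℝ → ℝ} {s : Set ℝ} (hφ : IntegrableOn φ s)
    (x : ℝ) :
    IntegrableOn (fun u => sin (u * x) * φ u) s :=
  hφ.bdd_mul (by fun_prop : Continuous fun u => sin (u * x)).aestronglyMeasurable
    (ae_of_all _ fun u => abs_sin_le_one _)

theorem sin_add_nat_mul_pi_div_mul {x : ℝ} (hx : x ≠ 0) (u : ℝ) (n : ℕ) :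
    sin ((u + n * (π / x)) * x) = (-1) ^ n * sin (u * x) := by
  rw [add_mul, mul_assoc, div_mul_cancel₀ _ hx, sin_add_nat_mul_pi]

noncomputable def sineLobe (φ : ℝ → ℝ) (x : ℝ) (n : ℕ) : ℝ :=
  ∫ u in Ioc 0 (π / x), sin (u * x) * φ (u + n * (π / x))

section SineLobe

variable {φ : ℝ → ℝ} {x : ℝ}

theorem integrableOn_sineLobe_integrand (hint : IntegrableOn φ (Ioi 0)) (hx : 0 < x) (n : ℕ) :
    IntegrableOn (fun u => sin (u * x) * φ (u + n * (π / x))) (Ioc 0 (π / x)) := by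
  have hshift : 0 ≤ n * (π / x) := by positivity
  refine IntegrableOn.sin_mul (integrableOn_Ioc_comp_add_right.2 (hint.mono_set ?_)) x
  exact Ioc_subset_Ioi_self.trans (Ioi_subset_Ioi (by simpa using hshift))

theorem hasSum_sineLobe (hint : IntegrableOn φ (Ioi 0)) (hx : 0 < x) :
    HasSum (fun n : ℕ => (-1) ^ n * sineLobe φ x n) (∫ u in Ioi 0, sin (u * x) * φ u) := by
  have hT : 0 < π / x := div_pos pi_pos hx
  have hmono : Monotone fun n : ℕ => n * (π / x) := Nat.mono_cast.mul_const hT.le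
  have hunbdd : ¬BddAbove (range fun n : ℕ => n * (π / x)) :=
    Filter.not_bddAbove_of_tendsto_atTop (tendsto_natCast_atTop_atTop.atTop_mul_const hT)
  have hsum := hasSum_setIntegral_Ioc_map_succ hmono hunbdd
    (g := fun u => sin (u * x) * φ u) (by simpa using hint.sin_mul x)
  have hterm (n : ℕ) :
      ∫ u in Ioc (n * (π / x)) ((n + 1 : ℕ) * (π / x)), sin (u * x) * φ u =
        (-1) ^ n * sineLobe φ x n :=
    calc _ = ∫ u in Ioc (0 + n * (π / x)) (π / x + n * (π / x)), sin (u * x) * φ u := by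
          rw [zero_add, Nat.cast_succ, add_one_mul, add_comm]
      _ = ∫ u in Ioc 0 (π / x), sin ((u + n * (π / x)) * x) * φ (u + n * (π / x)) :=
          (setIntegral_Ioc_comp_add_right (fun u => sin (u * x) * φ u) _ _ _).symm
      _ = (-1) ^ n * sineLobe φ x n := by
          simp only [sineLobe, sin_add_nat_mul_pi_div_mul hx.ne', mul_assoc, integral_const_mul]
  simpa only [hterm, Nat.cast_zero, zero_mul] using hsum

theorem sineLobe_antitone (hint : IntegrableOn φ (Ioi 0)) (hanti : AntitoneOn φ (Ioi 0))
    (hx : 0 < x) : Antitone (sineLobe φ x) := by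
  refine antitone_nat_of_succ_le fun n => setIntegral_mono_on
    (integrableOn_sineLobe_integrand hint hx (n + 1)) (integrableOn_sineLobe_integrand hint hx n)
    measurableSet_Ioc fun u hu => ?_
  have hsin : 0 ≤ sin (u * x) :=
    sin_nonneg_of_nonneg_of_le_pi (mul_nonneg hu.1.le hx.le) ((le_div_iff₀ hx).1 hu.2)
  have hT : 0 < π / x := div_pos pi_pos hx
  have hu_shift : u + n * (π / x) ∈ Ioi 0 := add_pos_of_pos_of_nonneg hu.1 (by positivity)
  gcongr
  exact hanti hu_shift (mem_Ioi.2 (by push_cast; linarith [hu_shift.out]))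
    (by push_cast; gcongr; linarith)

theorem sineLobe_zero_le (hpos : ∀ u ∈ Ioi (0:ℝ), 0 ≤ φ u) (hint : IntegrableOn φ (Ioi 0))
    (hx : 0 < x) : sineLobe φ x 0 ≤ ∫ u in Ioc 0 (π / x), φ u := by
  have h := integrableOn_sineLobe_integrand hint hx 0
  simp only [Nat.cast_zero, zero_mul, add_zero] at h
  simp only [sineLobe, Nat.cast_zero, zero_mul, add_zero]
  exact setIntegral_mono_on h (hint.mono_set Ioc_subset_Ioi_self) measurableSet_Ioc
    fun u hu => mul_le_of_le_one_left (hpos u hu.1) (sin_le_one _)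

end SineLobe

theorem smalltime_EqEsyEst1 (φ : ℝ → ℝ)
    (hpos : ∀ u ∈ Ioi (0:ℝ), 0 ≤ φ u)
    (hint : IntegrableOn φ (Ioi 0))
    (hanti : AntitoneOn φ (Ioi 0))
    (x : ℝ) (hx : 0 < x) :
    0 ≤ ∫ u in Ioi (0:ℝ), Real.sin (u * x) * φ u ∧
    ∫ u in Ioi (0:ℝ), Real.sin (u * x) * φ u ≤ ∫ u in Ioc (0:ℝ) (π / x), φ u := by
  obtain ⟨hnonneg, hle⟩ := (hasSum_sineLobe hint hx).nonneg_and_le_of_alternating_of_antitone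
    (sineLobe_antitone hint hanti hx)
  exact ⟨hnonneg, hle.trans (sineLobe_zero_le hpos hint hx)⟩
end

section
/- Let φ : (0,∞) → [0,∞) be integrable and monotone decreasing. Then for every x > 0, |∫₀^∞ cos(ux) φ(u) du| ≤ ∫₀^{3π/(2x)} φ(u) du. -/
open MeasureTheory Real Set Function Filter

/-!
Put `a = π / (2x)` and `b = 3π / (2x)`. On `(0, a)` the cosine is nonnegative, so the integral
there lies in `[0, ∫₀^a φ]`, and on `(a, b)` it lies in `[-∫ₐ^b φ, ∫ₐ^b φ]`. The function
`cos (u x)` is antiperiodic with antiperiod `π / x`; since `φ` decreases, each full period starting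
at `a` (where the cosine is first nonpositive) contributes a nonpositive amount, and each full
period starting at `b` a nonnegative one. So the tail over `(a, ∞)` is `≤ 0`, the tail over
`(b, ∞)` is `≥ 0`, and the integral lies between `-∫ₐ^b φ` and `∫₀^a φ`.
-/

theorem MeasureTheory.IntegrableOn.intervalIntegrable_of_Ioi {E : Type*} [NormedAddCommGroup E]
    {μ : Measure ℝ} {f : ℝ → E} {a b c : ℝ} (hf : IntegrableOn f (Ioi a) μ) (hb : a ≤ b)
    (hc : a ≤ c) : IntervalIntegrable f μ b c :=
  intervalIntegrable_iff.2 <| hf.mono_set fun _ hu => (le_min hb hc).trans_lt hu.1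

theorem abs_intervalIntegral_mul_le_of_abs_le_one {g φ : ℝ → ℝ} {c d : ℝ} (hcd : c ≤ d)
    (hg : ∀ u ∈ Ioo c d, |g u| ≤ 1) (hφ : ∀ u ∈ Ioo c d, 0 ≤ φ u)
    (hgφ : IntervalIntegrable (fun u => g u * φ u) volume c d)
    (hφi : IntervalIntegrable φ volume c d) :
    |∫ u in c..d, g u * φ u| ≤ ∫ u in c..d, φ u := by
  refine (intervalIntegral.abs_integral_le_integral_abs hcd).trans <|
    intervalIntegral.integral_mono_on_of_le_Ioo hcd hgφ.abs hφi fun u hu => ?_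
  rw [abs_mul, abs_of_nonneg (hφ u hu)]
  exact mul_le_of_le_one_left (hφ u hu) (hg u hu)

section Antiperiodic

variable {g φ : ℝ → ℝ} {p : ℝ}

theorem intervalIntegral_antiperiodic_mul_antitoneOn_nonpos {b : ℝ} (hp : 0 ≤ p)
    (hg : Antiperiodic g p) (hg_nonpos : ∀ u ∈ Icc b (b + p), g u ≤ 0)
    (hφ : AntitoneOn φ (Icc b (b + 2 * p)))
    (hfirst : IntervalIntegrable (fun u => g u * φ u) volume b (b + p))
    (hsecond : IntervalIntegrable (fun u => g u * φ u) volume (b + p) (b + 2 * p)) :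
    ∫ u in b..b + 2 * p, g u * φ u ≤ 0 := by
  have hshift : ∫ u in b + p..b + 2 * p, g u * φ u = ∫ u in b..b + p, g (u + p) * φ (u + p) := by
    rw [intervalIntegral.integral_comp_add_right (fun u => g u * φ u)]; ring_nf
  -- `g (u + p) = -g u`, so the second half cancels the first up to `g u * (φ u - φ (u + p)) ≤ 0`
  have hcancel : ∫ u in b..b + p, g (u + p) * φ (u + p) ≤ ∫ u in b..b + p, -(g u * φ u) := by
    refine intervalIntegral.integral_mono_on (by linarith) ?_ hfirst.neg fun u hu => ?_
    · have h := hsecond.comp_add_right p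
      rwa [add_sub_cancel_right, show b + 2 * p - p = b + p by ring] at h
    · have hmono : φ (u + p) ≤ φ u :=
        hφ ⟨hu.1, by linarith [hu.2]⟩ ⟨by linarith [hu.1], by linarith [hu.2]⟩ (by linarith)
      rw [hg u]
      nlinarith [hg_nonpos u hu]
  rw [← intervalIntegral.integral_add_adjacent_intervals hfirst hsecond, hshift]
  rw [intervalIntegral.integral_neg] at hcancel
  linarith

theorem integral_Ioi_antiperiodic_mul_antitoneOn_nonpos {a : ℝ} (hp : 0 < p)
    (hg : Antiperiodic g p) (hg_nonpos : ∀ u ∈ Icc a (a + p), g u ≤ 0)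
    (hφ : AntitoneOn φ (Ici a)) (hint : IntegrableOn (fun u => g u * φ u) (Ioi a)) :
    ∫ u in Ioi a, g u * φ u ≤ 0 := by
  have hblocks : ∀ n : ℕ, ∫ u in a..a + n * (2 * p), g u * φ u ≤ 0 := by
    intro n
    induction n with
    | zero => simp
    | succ n ih =>
      set b := a + n * (2 * p)
      have hab : a ≤ b := le_add_of_nonneg_right (by positivity)
      have hblock : ∫ u in b..b + 2 * p, g u * φ u ≤ 0 := by
        refine intervalIntegral_antiperiodic_mul_antitoneOn_nonpos hp.le hg (fun u hu => ?_)
          (hφ.mono fun u hu => hab.trans hu.1) (hint.intervalIntegrable_of_Ioi hab (by linarith))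
          (hint.intervalIntegrable_of_Ioi (by linarith) (by linarith))
        rw [← hg.periodic_two_mul.sub_nat_mul_eq n]
        exact hg_nonpos _ ⟨by linarith [hu.1], by linarith [hu.2]⟩
      rw [show a + ((n + 1 : ℕ) : ℝ) * (2 * p) = b + 2 * p by push_cast; ring,
        ← intervalIntegral.integral_add_adjacent_intervals (hint.intervalIntegrable_of_Ioi le_rfl hab)
          (hint.intervalIntegrable_of_Ioi hab (by linarith))]
      linarith
  have hlim : Tendsto (fun n : ℕ => a + n * (2 * p)) atTop atTop :=
    tendsto_atTop_add_const_left _ _ (tendsto_natCast_atTop_atTop.atTop_mul_const (by positivity))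
  exact le_of_tendsto' (intervalIntegral_tendsto_integral_Ioi a hint hlim) hblocks

theorem integral_Ioi_antiperiodic_mul_antitoneOn_nonneg {a : ℝ} (hp : 0 < p)
    (hg : Antiperiodic g p) (hg_nonneg : ∀ u ∈ Icc a (a + p), 0 ≤ g u)
    (hφ : AntitoneOn φ (Ici a)) (hint : IntegrableOn (fun u => g u * φ u) (Ioi a)) :
    0 ≤ ∫ u in Ioi a, g u * φ u := by
  have h := integral_Ioi_antiperiodic_mul_antitoneOn_nonpos (g := fun u => -g u) hp
    (fun u => by simp [hg u]) (fun u hu => neg_nonpos.2 (hg_nonneg u hu)) hφ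
    (by simp only [neg_mul]; exact hint.neg)
  simpa only [neg_mul, integral_neg, neg_nonpos] using h

end Antiperiodic

section CosMul

variable {φ : ℝ → ℝ} {x : ℝ}

theorem antiperiodic_cos_mul (hx : x ≠ 0) : Antiperiodic (fun u => cos (u * x)) (π / x) :=
  cos_antiperiodic.mul_const' hx

theorem intervalIntegral_cos_mul_mul_nonneg (hx : 0 < x) (hφ : ∀ u ∈ Ioo 0 (π / (2 * x)), 0 ≤ φ u)
    (hint : IntervalIntegrable (fun u => cos (u * x) * φ u) volume 0 (π / (2 * x))) :
    0 ≤ ∫ u in 0..π / (2 * x), cos (u * x) * φ u := by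
  refine (intervalIntegral.integral_zero (a := 0) (b := π / (2 * x))).symm.le.trans <|
    intervalIntegral.integral_mono_on_of_le_Ioo (by positivity) intervalIntegrable_const hint
      fun u hu => mul_nonneg (cos_nonneg_of_mem_Icc ⟨?_, ?_⟩) (hφ u hu)
  · nlinarith [hu.1, pi_pos]
  · have h := hu.2
    rw [lt_div_iff₀ (by positivity)] at h
    linarith

theorem integral_Ioi_cos_mul_mul_nonpos (hx : 0 < x) (hφ : AntitoneOn φ (Ici (π / (2 * x))))
    (hint : IntegrableOn (fun u => cos (u * x) * φ u) (Ioi (π / (2 * x)))) :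
    ∫ u in Ioi (π / (2 * x)), cos (u * x) * φ u ≤ 0 := by
  refine integral_Ioi_antiperiodic_mul_antitoneOn_nonpos (by positivity)
    (antiperiodic_cos_mul hx.ne') (fun u hu => ?_) hφ hint
  have h₁ := hu.1
  have h₂ := hu.2
  rw [div_add_div _ _ (by positivity) hx.ne', le_div_iff₀ (by positivity)] at h₂
  rw [div_le_iff₀ (by positivity)] at h₁
  exact cos_nonpos_of_pi_div_two_le_of_le (by nlinarith) (by nlinarith)

theorem integral_Ioi_cos_mul_mul_nonneg (hx : 0 < x) (hφ : AntitoneOn φ (Ici (3 * π / (2 * x))))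
    (hint : IntegrableOn (fun u => cos (u * x) * φ u) (Ioi (3 * π / (2 * x)))) :
    0 ≤ ∫ u in Ioi (3 * π / (2 * x)), cos (u * x) * φ u := by
  refine integral_Ioi_antiperiodic_mul_antitoneOn_nonneg (by positivity)
    (antiperiodic_cos_mul hx.ne') (fun u hu => ?_) hφ hint
  have h₁ := hu.1
  have h₂ := hu.2
  rw [div_add_div _ _ (by positivity) hx.ne', le_div_iff₀ (by positivity)] at h₂
  rw [div_le_iff₀ (by positivity)] at h₁
  rw [← cos_sub_two_pi]
  exact cos_nonneg_of_mem_Icc ⟨by nlinarith, by nlinarith⟩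

end CosMul

theorem smalltime_EqEsyEst2 (φ : ℝ → ℝ)
    (hpos : ∀ u ∈ Ioi (0:ℝ), 0 ≤ φ u)
    (hint : IntegrableOn φ (Ioi 0))
    (hanti : AntitoneOn φ (Ioi 0))
    (x : ℝ) (hx : 0 < x) :
    |∫ u in Ioi (0:ℝ), Real.cos (u * x) * φ u| ≤ ∫ u in Ioc (0:ℝ) (3 * π / (2 * x)), φ u := by
  set a := π / (2 * x)
  set b := 3 * π / (2 * x)
  have ha : 0 < a := by positivity
  have hab : a ≤ b := div_le_div_of_nonneg_right (by linarith [pi_pos]) (by positivity)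
  have hb : 0 < b := ha.trans_le hab
  have hF : IntegrableOn (fun u => cos (u * x) * φ u) (Ioi 0) :=
    hint.bdd_mul (by fun_prop) (Eventually.of_forall fun u => abs_cos_le_one _)
  have hFa := hF.mono_set (Ioi_subset_Ioi ha.le)
  have hFb := hF.mono_set (Ioi_subset_Ioi hb.le)
  have hφ₁ := hint.intervalIntegrable_of_Ioi le_rfl ha.le
  have hφ₂ := hint.intervalIntegrable_of_Ioi ha.le hb.le
  have hF₁ := hF.intervalIntegrable_of_Ioi le_rfl ha.le
  have hhead := abs_intervalIntegral_mul_le_of_abs_le_one ha.le (fun u _ => abs_cos_le_one _)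
    (fun u hu => hpos u hu.1) hF₁ hφ₁
  have hmiddle := abs_intervalIntegral_mul_le_of_abs_le_one hab (fun u _ => abs_cos_le_one _)
    (fun u hu => hpos u (ha.trans hu.1)) (hF.intervalIntegrable_of_Ioi ha.le hb.le) hφ₂
  have hhead_nonneg : 0 ≤ ∫ u in 0..a, cos (u * x) * φ u :=
    intervalIntegral_cos_mul_mul_nonneg hx (fun u hu => hpos u hu.1) hF₁
  have htail_nonpos : ∫ u in Ioi a, cos (u * x) * φ u ≤ 0 :=
    integral_Ioi_cos_mul_mul_nonpos hx (hanti.mono (Ici_subset_Ioi.2 ha)) hFa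
  have htail_nonneg : 0 ≤ ∫ u in Ioi b, cos (u * x) * φ u :=
    integral_Ioi_cos_mul_mul_nonneg hx (hanti.mono (Ici_subset_Ioi.2 hb)) hFb
  have htail_split := intervalIntegral.integral_interval_add_Ioi hFa hFb
  rw [← intervalIntegral.integral_of_le hb.le,
    ← intervalIntegral.integral_add_adjacent_intervals hφ₁ hφ₂,
    ← intervalIntegral.integral_interval_add_Ioi hF hFa, abs_le]
  constructor <;> linarith [abs_le.1 hhead, abs_le.1 hmiddle]
end

section
/- Let φ : (0,∞) → [0,∞) be integrable and unimodal with mode u* > 0, i.e., φ is nondecreasing on (0,u*] and nonincreasing on [u*,∞). Then for every x > 0, |∫₀^∞ cos(ux) φ(u) du| ≤ π·φ(u*)/x and |∫₀^∞ sin(ux) φ(u) du| ≤ π·φ(u*)/x. -/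
/-!
Let `h = π / x` and let `ψ` extend `φ` by `0` to all of `ℝ`. Translating by `h` flips the
sign of `cos (u * x)` and `sin (u * x)`, so twice the integral equals
`∫ w (u * x) (ψ u - ψ (u + h))` and is at most `∫ |ψ (u + h) - ψ u|` in absolute value.
A unimodal `ψ ≥ 0` is the difference of the nondecreasing functions `ψ (min u u*)` and
`φ u* - ψ (max u u*)`, both with values in `[0, φ u*]`; for such a function `f`,
`∫ (f (u + h) - f u) ≤ h φ u*`, which gives the bound `2 h φ u*`.
-/
open MeasureTheory Real Set Filter

theorem intervalIntegral_sub_comp_add_le_of_monotone {f : ℝ → ℝ} (hf : Monotone f)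
    {a b h : ℝ} (ha : ∀ u, a ≤ f u) (hb : ∀ u, f u ≤ b) (hh : 0 ≤ h) (s t : ℝ) :
    ∫ u in s..t, (f (u + h) - f u) ≤ h * (b - a) := by
  have hfi : ∀ p q, IntervalIntegrable f volume p q := fun _ _ => hf.intervalIntegrable
  have hfh : IntervalIntegrable (fun u => f (u + h)) volume s t :=
    (hf.comp (monotone_id.add_const h)).intervalIntegrable
  have hshift : ∫ u in s..t, (f (u + h) - f u)
      = (∫ u in t..t + h, f u) - ∫ u in s..s + h, f u := by
    rw [intervalIntegral.integral_sub hfh (hfi s t), intervalIntegral.integral_comp_add_right,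
      intervalIntegral.integral_interval_sub_interval_comm' (hfi _ _) (hfi _ _) (hfi _ _)]
  have hupper : ∫ u in t..t + h, f u ≤ h * b :=
    calc ∫ u in t..t + h, f u ≤ ∫ _ in t..t + h, b :=
          intervalIntegral.integral_mono_on (by linarith) (hfi _ _) intervalIntegrable_const
            fun u _ => hb u
      _ = h * b := by simp
  have hlower : h * a ≤ ∫ u in s..s + h, f u :=
    calc h * a = ∫ _ in s..s + h, a := by simp
      _ ≤ ∫ u in s..s + h, f u :=
          intervalIntegral.integral_mono_on (by linarith) intervalIntegrable_const (hfi _ _)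
            fun u _ => ha u
  rw [hshift]
  linarith

theorem integral_abs_sub_comp_add_le_of_unimodal {ψ : ℝ → ℝ} {m : ℝ}
    (hmono : MonotoneOn ψ (Iic m)) (hanti : AntitoneOn ψ (Ici m)) (hψ0 : ∀ u, 0 ≤ ψ u)
    (hψ : Integrable ψ) {h : ℝ} (hh : 0 ≤ h) :
    ∫ u, |ψ (u + h) - ψ u| ≤ 2 * h * ψ m := by
  have hmax : ∀ u, ψ u ≤ ψ m := fun u => (le_total u m).elim
    (fun hum => hmono hum self_mem_Iic hum) (fun hmu => hanti self_mem_Ici hmu hmu)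
  set A : ℝ → ℝ := fun u => ψ (min u m)
  set B : ℝ → ℝ := fun u => ψ m - ψ (max u m)
  have hA : Monotone A := fun u v huv =>
    hmono (min_le_right u m) (min_le_right v m) (min_le_min_right m huv)
  have hB : Monotone B := fun u v huv =>
    sub_le_sub_left (hanti (le_max_right u m) (le_max_right v m) (max_le_max_right m huv)) _
  have hAB : ∀ u, ψ u = A u - B u := fun u => by
    rcases le_total u m with hum | hmu
    · simp [A, B, min_eq_left hum, max_eq_right hum]
    · simp [A, B, min_eq_right hmu, max_eq_left hmu]
  have hpoint : ∀ u, |ψ (u + h) - ψ u| ≤ (A (u + h) - A u) + (B (u + h) - B u) := fun u => by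
    have hAu := hA (le_add_of_nonneg_right hh : u ≤ u + h)
    have hBu := hB (le_add_of_nonneg_right hh : u ≤ u + h)
    rw [hAB u, hAB (u + h), abs_le]
    constructor <;> linarith
  have hΔψ : Integrable (fun u => |ψ (u + h) - ψ u|) := ((hψ.comp_add_right h).sub hψ).abs
  have hinterval : ∀ R, 0 ≤ R → ∫ u in -R..R, |ψ (u + h) - ψ u| ≤ 2 * h * ψ m := by
    intro R hR
    have hΔA : IntervalIntegrable (fun u => A (u + h) - A u) volume (-R) R :=
      (hA.comp (monotone_id.add_const h)).intervalIntegrable.sub hA.intervalIntegrable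
    have hΔB : IntervalIntegrable (fun u => B (u + h) - B u) volume (-R) R :=
      (hB.comp (monotone_id.add_const h)).intervalIntegrable.sub hB.intervalIntegrable
    calc ∫ u in -R..R, |ψ (u + h) - ψ u|
        ≤ ∫ u in -R..R, ((A (u + h) - A u) + (B (u + h) - B u)) :=
          intervalIntegral.integral_mono_on (by linarith) hΔψ.intervalIntegrable
            (hΔA.add hΔB) fun u _ => hpoint u
      _ = (∫ u in -R..R, (A (u + h) - A u)) + ∫ u in -R..R, (B (u + h) - B u) :=
          intervalIntegral.integral_add hΔA hΔB
      _ ≤ h * (ψ m - 0) + h * (ψ m - 0) := add_le_add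
          (intervalIntegral_sub_comp_add_le_of_monotone hA (fun u => hψ0 _) (fun u => hmax _)
            hh _ _)
          (intervalIntegral_sub_comp_add_le_of_monotone hB (fun u => sub_nonneg.2 (hmax _))
            (fun u => sub_le_self _ (hψ0 _)) hh _ _)
      _ = 2 * h * ψ m := by ring
  exact le_of_tendsto (intervalIntegral_tendsto_integral hΔψ tendsto_neg_atTop_atBot tendsto_id)
    ((eventually_ge_atTop 0).mono hinterval)

theorem abs_integral_mul_le_of_antiperiodic {w g : ℝ → ℝ} {c : ℝ}
    (hw : Function.Antiperiodic w c) (hwm : AEStronglyMeasurable w) (hw1 : ∀ t, |w t| ≤ 1)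
    (hg : Integrable g) :
    |∫ u, w u * g u| ≤ (∫ u, |g (u + c) - g u|) / 2 := by
  have hbdd : ∀ᵐ t ∂volume, ‖w t‖ ≤ 1 := ae_of_all _ hw1
  have hwg : Integrable (fun u => w u * g u) := hg.bdd_mul hwm hbdd
  have hwgc : Integrable (fun u => w u * g (u + c)) := (hg.comp_add_right c).bdd_mul hwm hbdd
  have hflip : ∫ u, w u * g u = -∫ u, w u * g (u + c) := by
    rw [← integral_add_right_eq_self (fun u => w u * g u) c, ← integral_neg]
    simp only [hw _, neg_mul]
  have htwice : 2 * ∫ u, w u * g u = ∫ u, w u * (g u - g (u + c)) := by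
    rw [two_mul]
    nth_rw 2 [hflip]
    rw [← sub_eq_add_neg, ← integral_sub hwg hwgc]
    simp only [mul_sub]
  have hbound : |∫ u, w u * (g u - g (u + c))| ≤ ∫ u, |g (u + c) - g u| := by
    refine abs_integral_le_integral_abs.trans (integral_mono_of_nonneg
      (ae_of_all _ fun u => abs_nonneg _) ((hg.comp_add_right c).sub hg).abs
      (ae_of_all _ fun u => ?_))
    dsimp only
    rw [abs_mul, abs_sub_comm]
    exact mul_le_of_le_one_left (abs_nonneg _) (hw1 u)
  rw [← htwice, abs_mul, abs_two] at hbound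
  linarith

theorem monotoneOn_indicator_Ioi_zero {φ : ℝ → ℝ} {m : ℝ} (hpos : ∀ u ∈ Ioi (0:ℝ), 0 ≤ φ u)
    (hmono : MonotoneOn φ (Ioc 0 m)) : MonotoneOn ((Ioi 0).indicator φ) (Iic m) := by
  intro u hu v hv huv
  by_cases hu0 : 0 < u
  · have hv0 : 0 < v := hu0.trans_le huv
    rw [indicator_of_mem (mem_Ioi.2 hu0), indicator_of_mem (mem_Ioi.2 hv0)]
    exact hmono ⟨hu0, hu⟩ ⟨hv0, hv⟩ huv
  · rw [indicator_of_notMem (mt mem_Ioi.1 hu0)]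
    exact indicator_nonneg hpos v

theorem abs_integral_mul_le_of_antiperiodic_of_unimodal {w ψ : ℝ → ℝ} {c m : ℝ}
    (hw : Function.Antiperiodic w c) (hc : 0 ≤ c) (hwm : AEStronglyMeasurable w)
    (hw1 : ∀ t, |w t| ≤ 1) (hmono : MonotoneOn ψ (Iic m)) (hanti : AntitoneOn ψ (Ici m))
    (hψ0 : ∀ u, 0 ≤ ψ u) (hψ : Integrable ψ) :
    |∫ u, w u * ψ u| ≤ c * ψ m :=
  calc |∫ u, w u * ψ u| ≤ (∫ u, |ψ (u + c) - ψ u|) / 2 :=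
        abs_integral_mul_le_of_antiperiodic hw hwm hw1 hψ
    _ ≤ 2 * c * ψ m / 2 := by
        gcongr
        exact integral_abs_sub_comp_add_le_of_unimodal hmono hanti hψ0 hψ hc
    _ = c * ψ m := by ring

theorem smalltime_lemma51_ii (φ : ℝ → ℝ)
    (hpos : ∀ u ∈ Ioi (0:ℝ), 0 ≤ φ u)
    (hint : IntegrableOn φ (Ioi 0))
    (ustar : ℝ) (hustar : 0 < ustar)
    (hmono : MonotoneOn φ (Ioc 0 ustar))
    (hanti : AntitoneOn φ (Ici ustar))
    (x : ℝ) (hx : 0 < x) :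
    |∫ u in Ioi (0:ℝ), Real.cos (u * x) * φ u| ≤ π * φ ustar / x ∧
    |∫ u in Ioi (0:ℝ), Real.sin (u * x) * φ u| ≤ π * φ ustar / x := by
  set ψ := (Ioi (0:ℝ)).indicator φ
  have hψφ : ∀ u ∈ Ici ustar, ψ u = φ u := fun u hu =>
    indicator_of_mem (hustar.trans_le hu) φ
  have hψ : Integrable ψ := (integrable_indicator_iff measurableSet_Ioi).2 hint
  have hψanti : AntitoneOn ψ (Ici ustar) := fun u hu v hv huv => by
    rw [hψφ u hu, hψφ v hv]
    exact hanti hu hv huv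
  have hosc : ∀ w : ℝ → ℝ, Function.Antiperiodic w π → Continuous w → (∀ t, |w t| ≤ 1) →
      |∫ u in Ioi (0:ℝ), w (u * x) * φ u| ≤ π * φ ustar / x := by
    intro w hw hwc hw1
    have hext : ∫ u in Ioi (0:ℝ), w (u * x) * φ u = ∫ u, w (u * x) * ψ u := by
      rw [← integral_indicator measurableSet_Ioi]
      simp only [ψ, indicator_mul_right]
    rw [hext, ← hψφ ustar self_mem_Ici, mul_div_right_comm]
    exact abs_integral_mul_le_of_antiperiodic_of_unimodal (hw.mul_const hx.ne')
      (div_pos pi_pos hx).le (hwc.comp (continuous_mul_const x)).aestronglyMeasurable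
      (fun t => hw1 _) (monotoneOn_indicator_Ioi_zero hpos hmono) hψanti
      (indicator_nonneg hpos) hψ
  exact ⟨hosc cos cos_antiperiodic continuous_cos abs_cos_le_one,
    hosc sin sin_antiperiodic continuous_sin abs_sin_le_one⟩
end

section
/- Let ψ : ℝ → ℂ be infinitely differentiable with ∫_ℝ |u|^m |ψ^{(r)}(u)| du < ∞ for all integers m, r ≥ 0. For integers m ≥ 0 define P_m(x) := ((−i)^m/(2π)) ∫_ℝ e^{−iux} u^m ψ(u) du. Define integer coefficients c_{r,j}^m for integers r, j ≥ 0 and m ∈ ℤ by: c_{r,0}^m = −1 for all r and m; c_{0,j}^m = 0 for all j ≥ 1 and all m; and c_{r+1,j}^m = c_{r,j}^m + c_{r,j−1}^{m−1} for all r ≥ 0, j ≥ 1, and m (in particular c_{r,j}^m = 0 whenever j > r). Then for all integers r, m ≥ 0 and all x ≠ 0, P_m(x) = Σ_{j=1}^{min(r,m)} c_{r,j}^m · (∏_{i=0}^{j−1} (m−i)) · x^{−j} · P_{m−j}(x) + (−1)^r · ((−i)^{m−r}/(2π x^r)) · ∫_ℝ e^{−iux} u^m ψ^{(r)}(u) du.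 -/
open MeasureTheory Real Set

lemma aux_integrable (ψ : ℝ → ℂ) (hψ : ContDiff ℝ (⊤ : ℕ∞) ψ)
    (hint : ∀ m r : ℕ, Integrable (fun u : ℝ => |u| ^ m * ‖iteratedDeriv r ψ u‖))
    (m r : ℕ) (x : ℝ) :
    Integrable (fun u : ℝ => Complex.exp (-Complex.I * u * x) * (u : ℂ) ^ m * iteratedDeriv r ψ u) := by
  have hc : Continuous (iteratedDeriv r ψ) := hψ.continuous_iteratedDeriv r (by exact_mod_cast le_top)
  apply (hint m r).mono'
  · exact ((((continuous_const.mul Complex.continuous_ofReal).mul continuous_const).cexp).mul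
      ((Complex.continuous_ofReal.pow m))).mul hc |>.aestronglyMeasurable
  · filter_upwards with u
    have h1 : ‖Complex.exp (-Complex.I * u * x)‖ = 1 := by
      rw [Complex.norm_exp]
      simp
    rw [norm_mul, norm_mul, h1, one_mul]
    simp [abs_nonneg]

lemma aux_ibp (ψ : ℝ → ℂ) (hψ : ContDiff ℝ (⊤ : ℕ∞) ψ)
    (hint : ∀ m r : ℕ, Integrable (fun u : ℝ => |u| ^ m * ‖iteratedDeriv r ψ u‖))
    (m r : ℕ) (x : ℝ) :
    ∫ u : ℝ, Complex.exp (-Complex.I * u * x) * (u : ℂ) ^ m * iteratedDeriv (r + 1) ψ u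
      = Complex.I * x * (∫ u : ℝ, Complex.exp (-Complex.I * u * x) * (u : ℂ) ^ m * iteratedDeriv r ψ u)
        - (m : ℂ) * (∫ u : ℝ, Complex.exp (-Complex.I * u * x) * (u : ℂ) ^ (m - 1) * iteratedDeriv r ψ u) := by
  have hderiv : ∀ u : ℝ, HasDerivAt (fun u : ℝ => Complex.exp (-Complex.I * u * x) * (u : ℂ) ^ m * iteratedDeriv r ψ u)
      (-Complex.I * x * (Complex.exp (-Complex.I * u * x) * (u : ℂ) ^ m * iteratedDeriv r ψ u)
        + (m : ℂ) * (Complex.exp (-Complex.I * u * x) * (u : ℂ) ^ (m - 1) * iteratedDeriv r ψ u)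
        + Complex.exp (-Complex.I * u * x) * (u : ℂ) ^ m * iteratedDeriv (r + 1) ψ u) u := by
    intro u
    have h1 : HasDerivAt (fun u : ℝ => Complex.exp (-Complex.I * u * x))
        (-Complex.I * x * Complex.exp (-Complex.I * u * x)) u := by
      have hin : HasDerivAt (fun z : ℂ => -Complex.I * z * x) (-Complex.I * x) (u : ℂ) := by
        simpa using ((hasDerivAt_id (u : ℂ)).const_mul (-Complex.I)).mul_const (x : ℂ)
      have := (hin.cexp).comp_ofReal
      simpa [mul_comm] using this
    have h2 : HasDerivAt (fun u : ℝ => ((u : ℂ)) ^ m) ((m : ℂ) * (u : ℂ) ^ (m - 1)) u :=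
      (hasDerivAt_pow m ((u : ℂ))).comp_ofReal
    have h3 : HasDerivAt (iteratedDeriv r ψ) (iteratedDeriv (r + 1) ψ u) u := by
      have hd : DifferentiableAt ℝ (iteratedDeriv r ψ) u :=
        (hψ.differentiable_iteratedDeriv r (by exact_mod_cast lt_top_iff_ne_top.2 (by simp))).differentiableAt
      simpa [iteratedDeriv_succ] using hd.hasDerivAt
    have := (h1.mul h2).mul h3
    refine this.congr_deriv ?_
    simp only [Pi.mul_apply]
    ring
  have hi1 := aux_integrable ψ hψ hint m r x
  have hi2 := aux_integrable ψ hψ hint (m - 1) r x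
  have hi3 := aux_integrable ψ hψ hint m (r + 1) x
  have hint' : Integrable (fun u : ℝ =>
      -Complex.I * x * (Complex.exp (-Complex.I * u * x) * (u : ℂ) ^ m * iteratedDeriv r ψ u)
        + (m : ℂ) * (Complex.exp (-Complex.I * u * x) * (u : ℂ) ^ (m - 1) * iteratedDeriv r ψ u)
        + Complex.exp (-Complex.I * u * x) * (u : ℂ) ^ m * iteratedDeriv (r + 1) ψ u) :=
    ((hi1.const_mul _).add (hi2.const_mul _)).add hi3
  have hzero := integral_eq_zero_of_hasDerivAt_of_integrable hderiv hint' hi1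
  have hzero' : -Complex.I * x * (∫ u : ℝ, Complex.exp (-Complex.I * u * x) * (u : ℂ) ^ m * iteratedDeriv r ψ u)
      + (m : ℂ) * (∫ u : ℝ, Complex.exp (-Complex.I * u * x) * (u : ℂ) ^ (m - 1) * iteratedDeriv r ψ u)
      + (∫ u : ℝ, Complex.exp (-Complex.I * u * x) * (u : ℂ) ^ m * iteratedDeriv (r + 1) ψ u) = 0 := by
    have e1 : (∫ u : ℝ, (-Complex.I * x * (Complex.exp (-Complex.I * u * x) * (u : ℂ) ^ m * iteratedDeriv r ψ u)
          + (m : ℂ) * (Complex.exp (-Complex.I * u * x) * (u : ℂ) ^ (m - 1) * iteratedDeriv r ψ u))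
          + Complex.exp (-Complex.I * u * x) * (u : ℂ) ^ m * iteratedDeriv (r + 1) ψ u)
        = (∫ u : ℝ, -Complex.I * x * (Complex.exp (-Complex.I * u * x) * (u : ℂ) ^ m * iteratedDeriv r ψ u)
          + (m : ℂ) * (Complex.exp (-Complex.I * u * x) * (u : ℂ) ^ (m - 1) * iteratedDeriv r ψ u))
          + ∫ u : ℝ, Complex.exp (-Complex.I * u * x) * (u : ℂ) ^ m * iteratedDeriv (r + 1) ψ u :=
      integral_add ((hi1.const_mul _).add (hi2.const_mul _)) hi3
    have e2 : (∫ u : ℝ, -Complex.I * x * (Complex.exp (-Complex.I * u * x) * (u : ℂ) ^ m * iteratedDeriv r ψ u)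
          + (m : ℂ) * (Complex.exp (-Complex.I * u * x) * (u : ℂ) ^ (m - 1) * iteratedDeriv r ψ u))
        = (∫ u : ℝ, -Complex.I * x * (Complex.exp (-Complex.I * u * x) * (u : ℂ) ^ m * iteratedDeriv r ψ u))
          + ∫ u : ℝ, (m : ℂ) * (Complex.exp (-Complex.I * u * x) * (u : ℂ) ^ (m - 1) * iteratedDeriv r ψ u) :=
      integral_add (hi1.const_mul _) (hi2.const_mul _)
    rw [e1, e2, integral_const_mul, integral_const_mul] at hzero
    linear_combination hzero
  linear_combination hzero'

lemma aux_czero (c : ℕ → ℕ → ℤ → ℤ)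
    (hc1 : ∀ j : ℕ, 1 ≤ j → ∀ m : ℤ, c 0 j m = 0)
    (hcrec : ∀ (r j : ℕ), 1 ≤ j → ∀ m : ℤ, c (r + 1) j m = c r j m + c r (j - 1) (m - 1)) :
    ∀ r j : ℕ, r < j → ∀ m : ℤ, c r j m = 0 := by
  intro r
  induction r with
  | zero => exact fun j hj m => hc1 j hj m
  | succ r ih =>
    intro j hj m
    rw [hcrec r j (by omega) m, ih j (by omega) m, ih (j - 1) (by omega) (m - 1)]
    ring

lemma aux_prodzero (m j : ℕ) (h : m < j) : (∏ i ∈ Finset.range j, ((m : ℂ) - (i : ℂ))) = 0 :=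
  Finset.prod_eq_zero (Finset.mem_range.2 h) (by simp)

lemma aux_sum_step (P : ℕ → ℝ → ℂ) (c : ℕ → ℕ → ℤ → ℤ)
    (hc0 : ∀ (r : ℕ) (m : ℤ), c r 0 m = -1)
    (hc1 : ∀ j : ℕ, 1 ≤ j → ∀ m : ℤ, c 0 j m = 0)
    (hcrec : ∀ (r j : ℕ), 1 ≤ j → ∀ m : ℤ, c (r + 1) j m = c r j m + c r (j - 1) (m - 1))
    (r m' : ℕ) (x : ℝ) (hx : x ≠ 0) :
    ∑ j ∈ Finset.Icc 1 (r + 1),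
        (c (r + 1) j ((m' + 1 : ℕ) : ℤ) : ℂ) * (∏ i ∈ Finset.range j, (((m' + 1 : ℕ) : ℂ) - (i : ℂ))) *
          (x : ℂ) ^ (-(j : ℤ)) * P (m' + 1 - j) x
      = (∑ j ∈ Finset.Icc 1 r,
          (c r j ((m' + 1 : ℕ) : ℤ) : ℂ) * (∏ i ∈ Finset.range j, (((m' + 1 : ℕ) : ℂ) - (i : ℂ))) *
            (x : ℂ) ^ (-(j : ℤ)) * P (m' + 1 - j) x)
        - (((m' + 1 : ℕ) : ℂ) / x) * P m' x
        + (((m' + 1 : ℕ) : ℂ) / x) * ∑ j ∈ Finset.Icc 1 r,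
            (c r j ((m' : ℕ) : ℤ) : ℂ) * (∏ i ∈ Finset.range j, ((m' : ℂ) - (i : ℂ))) *
              (x : ℂ) ^ (-(j : ℤ)) * P (m' - j) x := by
  have hxc : (x : ℂ) ≠ 0 := Complex.ofReal_ne_zero.2 hx
  have hsplit : ∀ j ∈ Finset.Icc 1 (r + 1),
      (c (r + 1) j ((m' + 1 : ℕ) : ℤ) : ℂ) * (∏ i ∈ Finset.range j, (((m' + 1 : ℕ) : ℂ) - (i : ℂ))) *
          (x : ℂ) ^ (-(j : ℤ)) * P (m' + 1 - j) x
        = (c r j ((m' + 1 : ℕ) : ℤ) : ℂ) * (∏ i ∈ Finset.range j, (((m' + 1 : ℕ) : ℂ) - (i : ℂ))) *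
            (x : ℂ) ^ (-(j : ℤ)) * P (m' + 1 - j) x
          + (c r (j - 1) (((m' + 1 : ℕ) : ℤ) - 1) : ℂ) * (∏ i ∈ Finset.range j, (((m' + 1 : ℕ) : ℂ) - (i : ℂ))) *
            (x : ℂ) ^ (-(j : ℤ)) * P (m' + 1 - j) x := by
    intro j hj
    rw [hcrec r j (Finset.mem_Icc.1 hj).1 _]
    push_cast
    ring
  rw [Finset.sum_congr rfl hsplit, Finset.sum_add_distrib]
  have hA' : ∑ j ∈ Finset.Icc 1 (r + 1),
      (c r j ((m' + 1 : ℕ) : ℤ) : ℂ) * (∏ i ∈ Finset.range j, (((m' + 1 : ℕ) : ℂ) - (i : ℂ))) *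
        (x : ℂ) ^ (-(j : ℤ)) * P (m' + 1 - j) x
      = ∑ j ∈ Finset.Icc 1 r,
        (c r j ((m' + 1 : ℕ) : ℤ) : ℂ) * (∏ i ∈ Finset.range j, (((m' + 1 : ℕ) : ℂ) - (i : ℂ))) *
          (x : ℂ) ^ (-(j : ℤ)) * P (m' + 1 - j) x := by
    rw [Finset.sum_Icc_succ_top (by omega : 1 ≤ r + 1),
      aux_czero c hc1 hcrec r (r + 1) (by omega)]
    simp
  have hterm : ∀ i ∈ Finset.range (r + 1),
      (c r (1 + i - 1) (((m' + 1 : ℕ) : ℤ) - 1) : ℂ) *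
          (∏ k ∈ Finset.range (1 + i), (((m' + 1 : ℕ) : ℂ) - (k : ℂ))) *
          (x : ℂ) ^ (-((1 + i : ℕ) : ℤ)) * P (m' + 1 - (1 + i)) x
        = (((m' + 1 : ℕ) : ℂ) / x) *
            ((c r i ((m' : ℕ) : ℤ) : ℂ) * (∏ k ∈ Finset.range i, ((m' : ℂ) - (k : ℂ))) *
              (x : ℂ) ^ (-(i : ℤ)) * P (m' - i) x) := by
    intro i _
    have h1 : 1 + i - 1 = i := by omega
    have h2 : m' + 1 - (1 + i) = m' - i := by omega
    have hcc : (((m' + 1 : ℕ) : ℤ) - 1) = ((m' : ℕ) : ℤ) := by push_cast; ring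
    have h3 : 1 + i = i + 1 := by omega
    have hprod : (∏ k ∈ Finset.range (1 + i), (((m' + 1 : ℕ) : ℂ) - (k : ℂ)))
        = (∏ k ∈ Finset.range i, ((m' : ℂ) - (k : ℂ))) * ((m' + 1 : ℕ) : ℂ) := by
      rw [h3, Finset.prod_range_succ']
      congr 1
      · apply Finset.prod_congr rfl
        intro k _
        push_cast
        ring
      · push_cast; ring
    have hz : (x : ℂ) ^ (-((1 + i : ℕ) : ℤ)) = (x : ℂ) ^ (-(i : ℤ)) * (x : ℂ)⁻¹ := by
      rw [show (-((1 + i : ℕ) : ℤ)) = (-(i : ℤ)) - 1 from by push_cast; ring, zpow_sub_one₀ hxc]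
    rw [h1, h2, hcc, hprod, hz]
    field_simp
  have hB' : ∑ j ∈ Finset.Icc 1 (r + 1),
      (c r (j - 1) (((m' + 1 : ℕ) : ℤ) - 1) : ℂ) * (∏ i ∈ Finset.range j, (((m' + 1 : ℕ) : ℂ) - (i : ℂ))) *
        (x : ℂ) ^ (-(j : ℤ)) * P (m' + 1 - j) x
      = -((((m' + 1 : ℕ) : ℂ) / x) * P m' x)
        + (((m' + 1 : ℕ) : ℂ) / x) * ∑ j ∈ Finset.Icc 1 r,
            (c r j ((m' : ℕ) : ℤ) : ℂ) * (∏ i ∈ Finset.range j, ((m' : ℂ) - (i : ℂ))) *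
              (x : ℂ) ^ (-(j : ℤ)) * P (m' - j) x := by
    rw [← Finset.Ico_add_one_right_eq_Icc, Finset.sum_Ico_eq_sum_range]
    have hlen : r + 1 + 1 - 1 = r + 1 := by omega
    rw [hlen, Finset.sum_congr rfl hterm, ← Finset.mul_sum]
    have hins : Finset.range (r + 1) = insert 0 (Finset.Icc 1 r) := by
      ext a
      simp [Nat.lt_succ_iff]
      omega
    rw [hins, Finset.sum_insert (by simp), hc0 r _]
    simp only [Nat.sub_zero, Nat.cast_zero, neg_zero, zpow_zero, Finset.range_zero,
      Finset.prod_empty]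
    push_cast
    ring
  rw [hA', hB']
  ring

lemma aux_e1 (x : ℝ) (hx : x ≠ 0) (k : ℤ) (r : ℕ) :
    (-1 : ℂ) ^ (r + 1) * ((-Complex.I) ^ (k - ((r + 1 : ℕ) : ℤ)) / (2 * (π : ℂ) * (x : ℂ) ^ (r + 1)))
        * (Complex.I * x)
      = (-1 : ℂ) ^ r * ((-Complex.I) ^ (k - (r : ℤ)) / (2 * (π : ℂ) * (x : ℂ) ^ r)) := by
  have hxc : (x : ℂ) ≠ 0 := Complex.ofReal_ne_zero.2 hx
  have hA : (-Complex.I : ℂ) ≠ 0 := neg_ne_zero.2 Complex.I_ne_zero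
  have hpi : ((π : ℂ)) ≠ 0 := Complex.ofReal_ne_zero.2 Real.pi_ne_zero
  have h : (k - ((r + 1 : ℕ) : ℤ)) = (k - (r : ℤ)) - 1 := by push_cast; ring
  rw [h, zpow_sub_one₀ hA]
  have hinv : (-Complex.I)⁻¹ = Complex.I := by
    rw [inv_neg, Complex.inv_I, neg_neg]
  rw [hinv, pow_succ, pow_succ]
  field_simp
  ring_nf
  simp [Complex.I_sq]

lemma aux_e2 (x : ℝ) (hx : x ≠ 0) (m' r : ℕ) :
    (-1 : ℂ) ^ (r + 1) * ((-Complex.I) ^ (((m' + 1 : ℕ) : ℤ) - ((r + 1 : ℕ) : ℤ)) /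
          (2 * (π : ℂ) * (x : ℂ) ^ (r + 1))) * ((m' + 1 : ℕ) : ℂ)
      = -((((m' + 1 : ℕ) : ℂ)) / x) *
          ((-1 : ℂ) ^ r * ((-Complex.I) ^ (((m' : ℕ) : ℤ) - (r : ℤ)) / (2 * (π : ℂ) * (x : ℂ) ^ r))) := by
  have hxc : (x : ℂ) ≠ 0 := Complex.ofReal_ne_zero.2 hx
  have hpi : ((π : ℂ)) ≠ 0 := Complex.ofReal_ne_zero.2 Real.pi_ne_zero
  have h : (((m' + 1 : ℕ) : ℤ) - ((r + 1 : ℕ) : ℤ)) = ((m' : ℕ) : ℤ) - (r : ℤ) := by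
    push_cast; ring
  rw [h, pow_succ, pow_succ]
  field_simp

theorem smalltime_thm61_recursive_formula (ψ : ℝ → ℂ) (hψ : ContDiff ℝ (⊤ : ℕ∞) ψ)
    (hint : ∀ m r : ℕ, Integrable (fun u : ℝ => |u| ^ m * ‖iteratedDeriv r ψ u‖))
    (P : ℕ → ℝ → ℂ)
    (hP : ∀ (m : ℕ) (x : ℝ), P m x =
      ((-Complex.I) ^ m / (2 * (π : ℂ))) *
        ∫ u : ℝ, Complex.exp (-Complex.I * u * x) * (u : ℂ) ^ m * ψ u)
    (c : ℕ → ℕ → ℤ → ℤ)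
    (hc0 : ∀ (r : ℕ) (m : ℤ), c r 0 m = -1)
    (hc1 : ∀ j : ℕ, 1 ≤ j → ∀ m : ℤ, c 0 j m = 0)
    (hcrec : ∀ (r j : ℕ), 1 ≤ j → ∀ m : ℤ, c (r + 1) j m = c r j m + c r (j - 1) (m - 1)) :
    ∀ (r m : ℕ) (x : ℝ), x ≠ 0 →
      P m x =
        (∑ j ∈ Finset.Icc 1 (min r m),
          (c r j (m : ℤ) : ℂ) * (∏ i ∈ Finset.range j, ((m : ℂ) - (i : ℂ))) *
            (x : ℂ) ^ (-(j : ℤ)) * P (m - j) x)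
        + (-1) ^ r * ((-Complex.I) ^ ((m : ℤ) - (r : ℤ)) / (2 * (π : ℂ) * (x : ℂ) ^ r)) *
            ∫ u : ℝ, Complex.exp (-Complex.I * u * x) * (u : ℂ) ^ m * iteratedDeriv r ψ u := by
  intro r m x hx
  have key : ∀ (r m : ℕ),
      P m x = (∑ j ∈ Finset.Icc 1 r,
          (c r j (m : ℤ) : ℂ) * (∏ i ∈ Finset.range j, ((m : ℂ) - (i : ℂ))) *
            (x : ℂ) ^ (-(j : ℤ)) * P (m - j) x)
        + (-1) ^ r * ((-Complex.I) ^ ((m : ℤ) - (r : ℤ)) / (2 * (π : ℂ) * (x : ℂ) ^ r)) *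
            ∫ u : ℝ, Complex.exp (-Complex.I * u * x) * (u : ℂ) ^ m * iteratedDeriv r ψ u := by
    intro r
    induction r with
    | zero =>
      intro m
      rw [Finset.Icc_eq_empty (by omega), Finset.sum_empty, hP m x]
      simp only [Nat.cast_zero, sub_zero, zpow_natCast, pow_zero, mul_one, one_mul, zero_add,
        iteratedDeriv_zero]
    | succ r ih =>
      intro m
      cases m with
      | zero =>
        have hs0 : (∑ j ∈ Finset.Icc 1 (r + 1),
            (c (r + 1) j ((0 : ℕ) : ℤ) : ℂ) * (∏ i ∈ Finset.range j, (((0 : ℕ) : ℂ) - (i : ℂ))) *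
              (x : ℂ) ^ (-(j : ℤ)) * P (0 - j) x) = 0 := by
          apply Finset.sum_eq_zero
          intro j hj
          rw [aux_prodzero 0 j (by have := (Finset.mem_Icc.1 hj).1; omega)]
          ring
        have hs0r : (∑ j ∈ Finset.Icc 1 r,
            (c r j ((0 : ℕ) : ℤ) : ℂ) * (∏ i ∈ Finset.range j, (((0 : ℕ) : ℂ) - (i : ℂ))) *
              (x : ℂ) ^ (-(j : ℤ)) * P (0 - j) x) = 0 := by
          apply Finset.sum_eq_zero
          intro j hj
          rw [aux_prodzero 0 j (by have := (Finset.mem_Icc.1 hj).1; omega)]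
          ring
        have hibp := aux_ibp ψ hψ hint 0 r x
        have he1 := aux_e1 x hx ((0 : ℕ) : ℤ) r
        linear_combination (ih 0) + hs0r - hs0
          - ((-1 : ℂ) ^ (r + 1) * ((-Complex.I) ^ (((0 : ℕ) : ℤ) - ((r + 1 : ℕ) : ℤ)) /
              (2 * (π : ℂ) * (x : ℂ) ^ (r + 1)))) * hibp
          - (∫ u : ℝ, Complex.exp (-Complex.I * u * x) * (u : ℂ) ^ (0 : ℕ) * iteratedDeriv r ψ u) * he1
      | succ m' =>
        have hibp := aux_ibp ψ hψ hint (m' + 1) r x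
        simp only [Nat.add_sub_cancel] at hibp
        have he1 := aux_e1 x hx ((m' + 1 : ℕ) : ℤ) r
        have he2 := aux_e2 x hx m' r
        have hS := aux_sum_step P c hc0 hc1 hcrec r m' x hx
        linear_combination (ih (m' + 1)) - hS + ((((m' + 1 : ℕ)) : ℂ) / x) * (ih m')
          - ((-1 : ℂ) ^ (r + 1) * ((-Complex.I) ^ (((m' + 1 : ℕ) : ℤ) - ((r + 1 : ℕ) : ℤ)) /
              (2 * (π : ℂ) * (x : ℂ) ^ (r + 1)))) * hibp
          - (∫ u : ℝ, Complex.exp (-Complex.I * u * x) * (u : ℂ) ^ (m' + 1) * iteratedDeriv r ψ u) * he1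
          + (∫ u : ℝ, Complex.exp (-Complex.I * u * x) * (u : ℂ) ^ m' * iteratedDeriv r ψ u) * he2
  rw [key r m]
  congr 1
  refine (Finset.sum_subset ?_ ?_).symm
  · intro j hj
    simp only [Finset.mem_Icc] at hj ⊢
    exact ⟨hj.1, hj.2.trans (min_le_left r m)⟩
  · intro j hjr hjnot
    have hmj : m < j := by
      simp only [Finset.mem_Icc] at hjr hjnot
      omega
    rw [aux_prodzero m j hmj]
    ring
end

section
/- Let 0 < α < 2. Then there exists a constant C < ∞ such that for all λ > 0 and all u > 0, |∫₀^∞ sin(us) s^{−α} e^{−λs} ds| ≤ C · u^{α−1}. -/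
/-!
Split the integral at `s = 1/u`. Near the origin `|sin (u s)| ≤ u s`, so that piece is at most
`u ∫₀^{1/u} s^{1-α} ds = u^{α-1}/(2-α)`. On the tail the kernel `h(s) = s^{-α} e^{-λs}` is
decreasing to `0`, and one integration by parts against `sin (u s)` bounds that piece by
`2 h(1/u) / u ≤ 2 u^{α-1}`: the boundary term and `∫ |h'| = h(1/u)` each contribute `h(1/u)/u`.
-/

open MeasureTheory Real Set Filter Topology

section OscillatoryBounds

variable {h : ℝ → ℝ} {α u a : ℝ}

lemma abs_sin_mul_le_mul_rpow (hu : 0 ≤ u) {s y : ℝ} (hs : 0 < s) (hy : |y| ≤ s ^ (-α)) :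
    |sin (u * s) * y| ≤ u * s ^ (1 - α) := by
  have hsin : |sin (u * s)| ≤ u * s := by
    simpa [abs_of_nonneg (mul_nonneg hu hs.le)] using abs_sin_le_abs (x := u * s)
  calc |sin (u * s) * y| = |sin (u * s)| * |y| := abs_mul _ _
    _ ≤ (u * s) * s ^ (-α) := mul_le_mul hsin hy (abs_nonneg _) (by positivity)
    _ = u * s ^ (1 - α) := by rw [sub_eq_add_neg, rpow_add hs, rpow_one]; ring

lemma setIntegral_Ioc_zero_rpow (ha : 0 ≤ a) {r : ℝ} (hr : -1 < r) :
    ∫ s in Ioc 0 a, s ^ r = a ^ (r + 1) / (r + 1) := by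
  rw [← intervalIntegral.integral_of_le ha, integral_rpow (Or.inl hr),
    zero_rpow (by linarith), sub_zero]

lemma integrableOn_Ioc_sin_mul (hα : α < 2) (hu : 0 ≤ u)
    (hh : AEStronglyMeasurable h (volume.restrict (Ioc 0 a)))
    (hbound : ∀ s ∈ Ioc 0 a, |h s| ≤ s ^ (-α)) :
    IntegrableOn (fun s => sin (u * s) * h s) (Ioc 0 a) := by
  refine Integrable.mono'
    ((intervalIntegral.intervalIntegrable_rpow' (by linarith : (-1 : ℝ) < 1 - α)).1.const_mul u)
    ((continuous_sin.comp (continuous_const_mul u)).aestronglyMeasurable.mul hh) ?_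
  filter_upwards [ae_restrict_mem measurableSet_Ioc] with s hs
  exact abs_sin_mul_le_mul_rpow hu hs.1 (hbound s hs)

lemma abs_setIntegral_Ioc_sin_mul_le (hα : α < 2) (hu : 0 ≤ u) (ha : 0 ≤ a)
    (hbound : ∀ s ∈ Ioc 0 a, |h s| ≤ s ^ (-α)) :
    |∫ s in Ioc 0 a, sin (u * s) * h s| ≤ u * a ^ (2 - α) / (2 - α) := by
  calc |∫ s in Ioc 0 a, sin (u * s) * h s| ≤ ∫ s in Ioc 0 a, u * s ^ (1 - α) := by
        rw [← Real.norm_eq_abs]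
        refine norm_integral_le_of_norm_le
          ((intervalIntegral.intervalIntegrable_rpow' (by linarith : (-1 : ℝ) < 1 - α)).1.const_mul u) ?_
        filter_upwards [ae_restrict_mem measurableSet_Ioc] with s hs
        exact abs_sin_mul_le_mul_rpow hu hs.1 (hbound s hs)
    _ = u * a ^ (2 - α) / (2 - α) := by
        rw [integral_const_mul, setIntegral_Ioc_zero_rpow ha (by linarith),
          show 1 - α + 1 = 2 - α by ring, mul_div_assoc]

lemma integrableOn_sin_mul {s : Set ℝ} (hh : IntegrableOn h s) :
    IntegrableOn (fun x => sin (u * x) * h x) s :=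
  hh.bdd_mul (continuous_sin.comp (continuous_const_mul u)).aestronglyMeasurable
    (ae_of_all _ fun x => abs_sin_le_one (u * x))

lemma integrableOn_cos_mul {s : Set ℝ} (hh : IntegrableOn h s) :
    IntegrableOn (fun x => cos (u * x) * h x) s :=
  hh.bdd_mul (continuous_cos.comp (continuous_const_mul u)).aestronglyMeasurable
    (ae_of_all _ fun x => abs_cos_le_one (u * x))

lemma setIntegral_Ioi_sin_mul_eq {h' : ℝ → ℝ} (hu : u ≠ 0)
    (hderiv : ∀ s ∈ Ici a, HasDerivAt h (h' s) s) (htop : Tendsto h atTop (𝓝 0))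
    (hint : IntegrableOn h (Ioi a)) (hint' : IntegrableOn h' (Ioi a)) :
    ∫ s in Ioi a, sin (u * s) * h s =
      cos (u * a) * h a / u + ∫ s in Ioi a, cos (u * s) * h' s / u := by
  have hcos_int : IntegrableOn (fun s => cos (u * s) * h' s / u) (Ioi a) :=
    (integrableOn_cos_mul hint').div_const u
  have hF : ∀ s ∈ Ici a, HasDerivAt (fun s => -(cos (u * s) * h s) / u)
      (sin (u * s) * h s - cos (u * s) * h' s / u) s := by
    intro s hs
    have hcos : HasDerivAt (fun s => cos (u * s)) (-sin (u * s) * u) s := by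
      simpa using ((hasDerivAt_id s).const_mul u).cos
    exact ((hcos.mul (hderiv s hs)).neg.div_const u).congr_deriv (by field_simp; ring)
  have hFtop : Tendsto (fun s => -(cos (u * s) * h s) / u) atTop (𝓝 0) := by
    refine squeeze_zero_norm (fun s => ?_) (by simpa using htop.abs.div_const |u|)
    simp only [norm_div, norm_neg, norm_mul, Real.norm_eq_abs]
    gcongr
    exact mul_le_of_le_one_left (abs_nonneg _) (abs_cos_le_one _)
  have := integral_Ioi_of_hasDerivAt_of_tendsto' hF ((integrableOn_sin_mul hint).sub hcos_int) hFtop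
  rw [integral_sub (integrableOn_sin_mul hint) hcos_int] at this
  linear_combination this

lemma abs_setIntegral_Ioi_sin_mul_le {h' : ℝ → ℝ} (hu : 0 < u)
    (hderiv : ∀ s ∈ Ici a, HasDerivAt h (h' s) s) (hh' : ∀ s ∈ Ioi a, h' s ≤ 0)
    (htop : Tendsto h atTop (𝓝 0)) (hint : IntegrableOn h (Ioi a)) :
    |∫ s in Ioi a, sin (u * s) * h s| ≤ 2 * h a / u := by
  have hh'int : IntegrableOn h' (Ioi a) := integrableOn_Ioi_deriv_of_nonpos' hderiv hh' htop
  have hvar : ∫ s in Ioi a, -h' s = h a := by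
    rw [integral_neg, integral_Ioi_of_hasDerivAt_of_nonpos' hderiv hh' htop]
    ring
  have hha : 0 ≤ h a :=
    hvar ▸ setIntegral_nonneg measurableSet_Ioi fun s hs => neg_nonneg.2 (hh' s hs)
  have hcos_le : |∫ s in Ioi a, cos (u * s) * h' s / u| ≤ h a / u := by
    calc |∫ s in Ioi a, cos (u * s) * h' s / u| ≤ ∫ s in Ioi a, -h' s / u := by
          rw [← Real.norm_eq_abs]
          refine norm_integral_le_of_norm_le (hh'int.neg.div_const u) ?_
          filter_upwards [ae_restrict_mem measurableSet_Ioi] with s hs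
          rw [Real.norm_eq_abs, abs_div, abs_mul, abs_of_pos hu,
            abs_of_nonpos (hh' s hs)]
          gcongr
          exact mul_le_of_le_one_left (by linarith [hh' s hs]) (abs_cos_le_one _)
      _ = h a / u := by rw [integral_div, hvar]
  have hbdry : |cos (u * a) * h a / u| ≤ h a / u := by
    rw [abs_div, abs_mul, abs_of_pos hu, abs_of_nonneg hha]
    gcongr
    exact mul_le_of_le_one_left hha (abs_cos_le_one _)
  calc |∫ s in Ioi a, sin (u * s) * h s|
      ≤ |cos (u * a) * h a / u| + |∫ s in Ioi a, cos (u * s) * h' s / u| :=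
        setIntegral_Ioi_sin_mul_eq hu.ne' hderiv htop hint hh'int ▸ abs_add_le _ _
    _ ≤ h a / u + h a / u := add_le_add hbdry hcos_le
    _ = 2 * h a / u := by ring

end OscillatoryBounds

section DampedPowerKernel

variable {α lam : ℝ}

lemma hasDerivAt_rpow_neg_mul_exp {s : ℝ} (hs : 0 < s) :
    HasDerivAt (fun s => s ^ (-α) * exp (-(lam * s)))
      (-(α * s ^ (-α - 1) + lam * s ^ (-α)) * exp (-(lam * s))) s := by
  have hpow := hasDerivAt_rpow_const (p := -α) (Or.inl hs.ne')
  have hexp : HasDerivAt (fun s => exp (-(lam * s))) (exp (-(lam * s)) * -lam) s := by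
    simpa using ((hasDerivAt_id s).const_mul lam).neg.exp
  exact (hpow.mul hexp).congr_deriv (by ring)

lemma tendsto_rpow_neg_mul_exp_atTop (hα : 0 < α) (hlam : 0 < lam) :
    Tendsto (fun s => s ^ (-α) * exp (-(lam * s))) atTop (𝓝 0) := by
  simpa using (tendsto_rpow_neg_atTop hα).mul
    (tendsto_exp_neg_atTop_nhds_zero.comp (tendsto_id.const_mul_atTop hlam))

lemma abs_rpow_neg_mul_exp_le (hlam : 0 ≤ lam) {s : ℝ} (hs : 0 < s) :
    |s ^ (-α) * exp (-(lam * s))| ≤ s ^ (-α) := by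
  rw [abs_of_pos (by positivity)]
  exact mul_le_of_le_one_right (by positivity) (exp_le_one_iff.2 (by nlinarith))

lemma integrableOn_Ioi_rpow_neg_mul_exp {a : ℝ} (ha : 0 < a) (hα : 0 ≤ α) (hlam : 0 < lam) :
    IntegrableOn (fun s => s ^ (-α) * exp (-(lam * s))) (Ioi a) := by
  refine ((exp_neg_integrableOn_Ioi a hlam).const_mul (a ^ (-α))).mono'
    (Measurable.aestronglyMeasurable (by fun_prop)) ?_
  filter_upwards [ae_restrict_mem measurableSet_Ioi] with s hs
  have hs0 : 0 < s := ha.trans hs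
  calc ‖s ^ (-α) * exp (-(lam * s))‖ = s ^ (-α) * exp (-(lam * s)) := by
        rw [Real.norm_eq_abs, abs_of_pos (by positivity)]
    _ ≤ a ^ (-α) * exp (-lam * s) := by
        rw [neg_mul]
        exact mul_le_mul_of_nonneg_right (rpow_le_rpow_of_nonpos ha hs.le (neg_nonpos.2 hα))
          (exp_pos _).le

lemma abs_setIntegral_Ioi_sin_mul_rpow_neg_mul_exp_le {a u : ℝ} (ha : 0 < a) (hα : 0 < α)
    (hlam : 0 < lam) (hu : 0 < u) :
    |∫ s in Ioi a, sin (u * s) * (s ^ (-α) * exp (-(lam * s)))| ≤ 2 * a ^ (-α) / u := by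
  refine (abs_setIntegral_Ioi_sin_mul_le hu
    (fun s hs => hasDerivAt_rpow_neg_mul_exp (ha.trans_le hs))
    (fun s hs => mul_nonpos_of_nonpos_of_nonneg
      (neg_nonpos.2 (by have := ha.trans hs; positivity)) (exp_pos _).le)
    (tendsto_rpow_neg_mul_exp_atTop hα hlam)
    (integrableOn_Ioi_rpow_neg_mul_exp ha hα.le hlam)).trans ?_
  gcongr
  exact (le_abs_self _).trans (abs_rpow_neg_mul_exp_le hlam.le ha)

end DampedPowerKernel

theorem smalltime_AuxEst10 (α : ℝ) (h0 : 0 < α) (h2 : α < 2) :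
    ∃ C : ℝ, ∀ lam u : ℝ, 0 < lam → 0 < u →
      |∫ s in Ioi (0:ℝ), Real.sin (u * s) * s ^ (-α) * Real.exp (-(lam * s))| ≤ C * u ^ (α - 1) := by
  refine ⟨1 / (2 - α) + 2, fun lam u hlam hu => ?_⟩
  have ha : 0 < u⁻¹ := inv_pos.2 hu
  have hbound : ∀ s ∈ Ioc 0 u⁻¹, |s ^ (-α) * exp (-(lam * s))| ≤ s ^ (-α) :=
    fun s hs => abs_rpow_neg_mul_exp_le hlam.le hs.1
  have hnear_int := integrableOn_Ioc_sin_mul h2 hu.le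
    (Measurable.aestronglyMeasurable (by fun_prop)) hbound
  have htail_int := integrableOn_sin_mul (u := u) (integrableOn_Ioi_rpow_neg_mul_exp ha h0.le hlam)
  simp only [mul_assoc]
  rw [← Ioc_union_Ioi_eq_Ioi ha.le,
    setIntegral_union (Ioc_disjoint_Ioi le_rfl) measurableSet_Ioi hnear_int htail_int]
  have hnear_scale : u * u⁻¹ ^ (2 - α) = u ^ (α - 1) := by
    rw [inv_rpow hu.le, ← rpow_neg hu.le, show α - 1 = 1 + -(2 - α) by ring, rpow_add hu, rpow_one]
  have htail_scale : u⁻¹ ^ (-α) / u = u ^ (α - 1) := by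
    rw [inv_rpow hu.le, ← rpow_neg hu.le, neg_neg, rpow_sub_one hu.ne']
  calc _ ≤ _ := abs_add_le _ _
    _ ≤ u * u⁻¹ ^ (2 - α) / (2 - α) + 2 * u⁻¹ ^ (-α) / u :=
        add_le_add (abs_setIntegral_Ioc_sin_mul_le h2 hu.le ha.le hbound)
          (abs_setIntegral_Ioi_sin_mul_rpow_neg_mul_exp_le ha h0 hlam hu)
    _ = (1 / (2 - α) + 2) * u ^ (α - 1) := by
        rw [mul_div_assoc 2, hnear_scale, htail_scale]
        ring
end

section
/- Let 0 < α < 2 and let j ≥ 1 be an integer. Then there exists a constant C_j < ∞ such that for all λ > 0 and all u > 0, |∫₀^∞ cos(us) s^{j−α} e^{−λs} ds| ≤ C_j (1+λ)^j u^{α−1−j} and |∫₀^∞ sin(us) s^{j−α} e^{−λs} ds| ≤ C_j (1+λ)^j u^{α−1−j}. -/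
/-!
With `w = j + 1 - α > 0` and `z = λ - i u`, the two integrals are the real and imaginary parts of
`∫₀^∞ s^(w-1) e^(-z s) ds = Γ(w) z^(-w)`. This Laplace transform is known for real `z > 0`,
and both sides are holomorphic in the half-plane `Re z > 0`, so the identity theorem extends
it there. Hence both integrals are bounded by `Γ(w) |z|^(-w) ≤ Γ(w) u^(-w)`, uniformly in `λ`.
-/

open MeasureTheory Real Set Filter Topology
open scoped Complex

open Complex in
lemma norm_cpow_mul_cexp_neg_mul {a z : ℂ} {t : ℝ} (ht : 0 < t) :
    ‖(t : ℂ) ^ (a - 1) * cexp (-(z * t))‖ = t ^ (a.re - 1) * rexp (-(z.re * t)) := by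
  rw [norm_mul, norm_cpow_eq_rpow_re_of_pos ht, norm_exp]
  simp

lemma aestronglyMeasurable_cpow_mul_cexp_neg_mul (a z : ℂ) :
    AEStronglyMeasurable (fun t : ℝ => (t : ℂ) ^ (a - 1) * cexp (-(z * t)))
      (volume.restrict (Ioi 0)) := by
  refine ContinuousOn.aestronglyMeasurable (fun t ht => ?_) measurableSet_Ioi
  refine ContinuousAt.continuousWithinAt (ContinuousAt.mul ?_ (by fun_prop))
  exact Complex.continuousAt_ofReal_cpow_const t _ (Or.inr (ne_of_gt ht))

lemma integrableOn_cpow_mul_cexp_neg_mul_Ioi {a z : ℂ} (ha : 0 < a.re) (hz : 0 < z.re) :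
    IntegrableOn (fun t : ℝ => (t : ℂ) ^ (a - 1) * cexp (-(z * t))) (Ioi 0) := by
  have hdom := integrableOn_rpow_mul_exp_neg_mul_rpow (p := 1) (s := a.re - 1)
    (by linarith) one_pos hz
  simp only [rpow_one] at hdom
  refine hdom.mono' (aestronglyMeasurable_cpow_mul_cexp_neg_mul a z) ?_
  filter_upwards [ae_restrict_mem measurableSet_Ioi] with t ht
  rw [norm_cpow_mul_cexp_neg_mul ht, neg_mul]

lemma differentiableOn_integral_cpow_mul_cexp_neg_mul_Ioi {a : ℂ} (ha : 0 < a.re) :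
    DifferentiableOn ℂ (fun z => ∫ t in Ioi (0 : ℝ), (t : ℂ) ^ (a - 1) * cexp (-(z * t)))
      {z | 0 < z.re} := by
  intro z₀ (hz₀ : 0 < z₀.re)
  set ε := z₀.re / 2
  have hε : 0 < ε := half_pos hz₀
  have hre : ∀ z ∈ Metric.ball z₀ ε, ε ≤ z.re := fun z hz => by
    have := (Complex.abs_re_le_norm (z - z₀)).trans_lt (mem_ball_iff_norm.mp hz)
    rw [Complex.sub_re, abs_sub_lt_iff] at this
    linarith [show ε = z₀.re / 2 from rfl]
  have hdom := integrableOn_rpow_mul_exp_neg_mul_rpow (p := 1) (s := a.re)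
    (by linarith) one_pos hε
  simp only [rpow_one] at hdom
  refine (hasDerivAt_integral_of_dominated_loc_of_deriv_le
    (F' := fun z (t : ℝ) => (t : ℂ) ^ (a - 1) * cexp (-(z * t)) * -t)
    (Metric.ball_mem_nhds z₀ hε)
    (Eventually.of_forall fun z => aestronglyMeasurable_cpow_mul_cexp_neg_mul a z)
    (integrableOn_cpow_mul_cexp_neg_mul_Ioi ha hz₀)
    ((aestronglyMeasurable_cpow_mul_cexp_neg_mul a z₀).mul (by fun_prop))
    ?_ hdom ?_).2.differentiableAt.differentiableWithinAt
  · filter_upwards [ae_restrict_mem measurableSet_Ioi] with t (ht : 0 < t) z hz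
    rw [norm_mul, norm_cpow_mul_cexp_neg_mul ht, norm_neg, Complex.norm_real,
      norm_of_nonneg ht.le, mul_right_comm, rpow_sub_one ht.ne', div_mul_cancel₀ _ ht.ne',
      neg_mul]
    gcongr
    exact hre z hz
  · refine Eventually.of_forall fun t z _ => ?_
    simpa [mul_assoc] using
      (((hasDerivAt_id z).mul_const (t : ℂ)).neg.cexp).const_mul ((t : ℂ) ^ (a - 1))

open Complex in
lemma integral_cpow_mul_cexp_neg_mul_Ioi {a z : ℂ} (ha : 0 < a.re) (hz : 0 < z.re) :
    ∫ t in Ioi (0 : ℝ), (t : ℂ) ^ (a - 1) * cexp (-(z * t)) = Gamma a * z ^ (-a) := by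
  have hU : IsOpen {z : ℂ | 0 < z.re} := isOpen_lt continuous_const continuous_re
  have hG : AnalyticOnNhd ℂ (fun z : ℂ => Gamma a * z ^ (-a)) {z | 0 < z.re} :=
    DifferentiableOn.analyticOnNhd (fun z hz =>
      ((differentiableAt_id.cpow (differentiableAt_const _) (Or.inl hz)).const_mul
        _).differentiableWithinAt) hU
  have hreal : ∀ r : ℝ, 0 < r →
      ∫ t in Ioi (0 : ℝ), (t : ℂ) ^ (a - 1) * cexp (-(r * t)) =
        Gamma a * (r : ℂ) ^ (-a) := by
    intro r hr
    rw [integral_cpow_mul_exp_neg_mul_Ioi ha hr, one_div,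
      inv_cpow _ _ (by rw [arg_ofReal_of_nonneg hr.le]; exact pi_ne_zero.symm),
      ← cpow_neg, mul_comm]
  have hofReal : Tendsto ((↑) : ℝ → ℂ) (𝓝[≠] 1) (𝓝[≠] 1) :=
    continuous_ofReal.continuousWithinAt.tendsto_nhdsWithin fun r hr => by
      simpa using hr
  have hF := (differentiableOn_integral_cpow_mul_cexp_neg_mul_Ioi ha).analyticOnNhd hU
  refine hF.eqOn_of_preconnected_of_frequently_eq hG (convex_halfSpace_re_gt 0).isPreconnected
    (z₀ := 1) (by simp) ?_ hz
  exact hofReal.frequently ((eventually_nhdsWithin_of_eventually_nhds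
    (lt_mem_nhds one_pos)).mono hreal).frequently

section OscillatoryGamma

variable {w lam u : ℝ}

lemma cpow_mul_cexp_neg_mul_sub_mul_I {t : ℝ} (ht : 0 < t) :
    (t : ℂ) ^ ((w : ℂ) - 1) * cexp (-((lam - u * Complex.I) * t)) =
      ((t ^ (w - 1) * rexp (-(lam * t)) : ℝ) : ℂ) * cexp ((u * t : ℝ) * Complex.I) := by
  rw [Complex.ofReal_mul, Complex.ofReal_cpow ht.le, Complex.ofReal_exp, mul_assoc,
    ← Complex.exp_add]
  push_cast
  ring_nf

lemma integral_cos_mul_rpow_mul_exp_neg_mul (hw : 0 < w) (hlam : 0 < lam) :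
    ∫ s in Ioi (0 : ℝ), cos (u * s) * s ^ (w - 1) * rexp (-(lam * s)) =
      (Complex.Gamma w * (lam - u * Complex.I) ^ (-(w : ℂ))).re := by
  have hz : 0 < (lam - u * Complex.I).re := by simpa using hlam
  rw [← integral_cpow_mul_cexp_neg_mul_Ioi (by simpa using hw) hz, ← RCLike.re_to_complex,
    ← integral_re (integrableOn_cpow_mul_cexp_neg_mul_Ioi (by simpa using hw) hz)]
  refine setIntegral_congr_fun measurableSet_Ioi fun s (hs : 0 < s) => ?_
  rw [RCLike.re_to_complex, cpow_mul_cexp_neg_mul_sub_mul_I hs, Complex.re_ofReal_mul,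
    Complex.exp_ofReal_mul_I_re]
  ring

lemma integral_sin_mul_rpow_mul_exp_neg_mul (hw : 0 < w) (hlam : 0 < lam) :
    ∫ s in Ioi (0 : ℝ), sin (u * s) * s ^ (w - 1) * rexp (-(lam * s)) =
      (Complex.Gamma w * (lam - u * Complex.I) ^ (-(w : ℂ))).im := by
  have hz : 0 < (lam - u * Complex.I).re := by simpa using hlam
  rw [← integral_cpow_mul_cexp_neg_mul_Ioi (by simpa using hw) hz, ← RCLike.im_to_complex,
    ← integral_im (integrableOn_cpow_mul_cexp_neg_mul_Ioi (by simpa using hw) hz)]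
  refine setIntegral_congr_fun measurableSet_Ioi fun s (hs : 0 < s) => ?_
  rw [RCLike.im_to_complex, cpow_mul_cexp_neg_mul_sub_mul_I hs, Complex.im_ofReal_mul,
    Complex.exp_ofReal_mul_I_im]
  ring

lemma norm_Gamma_mul_sub_mul_I_cpow_neg_le (hw : 0 < w) (hu : 0 < u) :
    ‖Complex.Gamma w * (lam - u * Complex.I) ^ (-(w : ℂ))‖ ≤ Gamma w * u ^ (-w) := by
  have hnorm : u ≤ ‖(lam : ℂ) - u * Complex.I‖ := by
    simpa [abs_of_pos hu] using Complex.abs_im_le_norm ((lam : ℂ) - u * Complex.I)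
  rw [norm_mul, Complex.Gamma_ofReal, Complex.norm_real, norm_of_nonneg (Gamma_pos_of_pos hw).le,
    ← Complex.ofReal_neg, Complex.norm_cpow_real]
  exact mul_le_mul_of_nonneg_left (rpow_le_rpow_of_nonpos hu hnorm (by linarith))
    (Gamma_pos_of_pos hw).le

end OscillatoryGamma

theorem smalltime_AuxEst1b_general (α : ℝ) (h2 : α < 2) (j : ℕ) (hj : 1 ≤ j) :
    ∃ C : ℝ, ∀ lam u : ℝ, 0 < lam → 0 < u →
      |∫ s in Ioi (0:ℝ), Real.cos (u * s) * s ^ ((j : ℝ) - α) * Real.exp (-(lam * s))| ≤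
        C * (1 + lam) ^ j * u ^ (α - 1 - j) ∧
      |∫ s in Ioi (0:ℝ), Real.sin (u * s) * s ^ ((j : ℝ) - α) * Real.exp (-(lam * s))| ≤
        C * (1 + lam) ^ j * u ^ (α - 1 - j) := by
  have hw : 0 < (j : ℝ) + 1 - α := by
    have : (1 : ℝ) ≤ j := by exact_mod_cast hj
    linarith
  refine ⟨Gamma ((j : ℝ) + 1 - α), fun lam u hlam hu => ?_⟩
  have hexp : (j : ℝ) - α = ((j : ℝ) + 1 - α) - 1 := by ring
  have hbound : Gamma ((j : ℝ) + 1 - α) * u ^ (-((j : ℝ) + 1 - α)) ≤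
      Gamma ((j : ℝ) + 1 - α) * (1 + lam) ^ j * u ^ (α - 1 - j) := by
    rw [show -((j : ℝ) + 1 - α) = α - 1 - j by ring, mul_right_comm]
    exact le_mul_of_one_le_right (by positivity [Gamma_pos_of_pos hw])
      (one_le_pow₀ (by linarith))
  rw [hexp, integral_cos_mul_rpow_mul_exp_neg_mul hw hlam,
    integral_sin_mul_rpow_mul_exp_neg_mul hw hlam]
  have hnorm := (norm_Gamma_mul_sub_mul_I_cpow_neg_le (lam := lam) hw hu).trans hbound
  exact ⟨(Complex.abs_re_le_norm _).trans hnorm, (Complex.abs_im_le_norm _).trans hnorm⟩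

theorem smalltime_AuxEst1b (α : ℝ) (h0 : 0 < α) (h2 : α < 2) (j : ℕ) (hj : 1 ≤ j) :
    ∃ C : ℝ, ∀ lam u : ℝ, 0 < lam → 0 < u →
      |∫ s in Ioi (0:ℝ), Real.cos (u * s) * s ^ ((j : ℝ) - α) * Real.exp (-(lam * s))| ≤
        C * (1 + lam) ^ j * u ^ (α - 1 - j) ∧
      |∫ s in Ioi (0:ℝ), Real.sin (u * s) * s ^ ((j : ℝ) - α) * Real.exp (-(lam * s))| ≤
        C * (1 + lam) ^ j * u ^ (α - 1 - j) :=
  smalltime_AuxEst1b_general α h2 j hj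
end

section
/- Let μ be a Borel probability measure on ℝ, let ν be a Borel measure on ℝ, and let 0 < c < d < ∞ with ν([c,∞)) < ∞. Let φ : ℝ → ℝ be continuously differentiable with support contained in [c,d]. Then for every Δ > 0, |(1/Δ) ∫_ℝ φ dμ − ∫_ℝ φ dν| ≤ (sup_{x∈ℝ} |φ(x)| + ∫_ℝ |φ'(y)| dy) · sup_{y∈[c,d]} |(1/Δ) μ([y,∞)) − ν([y,∞))|. -/
/-!
Writing `φ x = ∫_{y ≤ x} φ' y dy` and swapping the two integrals gives the tail formula
`∫ φ ∂m = ∫ m [y, ∞) φ' y dy` for every measure `m` that is finite on `[c, ∞) ⊇ supp φ'`.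
Applied to `μ` and `ν`, the left-hand side becomes `∫ ((1/Δ) μ [y, ∞) - ν [y, ∞)) φ' y dy`, and since
`φ'` vanishes off `[c, d]` this is at most the supremum of the tail difference over `[c, d]` times
`∫ |φ'|`.
-/

open MeasureTheory Real Set Function

lemma abs_integral_mul_le_iSup_abs_mul_integral_abs {α : Type*} [MeasurableSpace α]
    {μ : Measure α} {s : Set α} {T g : α → ℝ} (hT : BddAbove (range fun y : s => |T y|))
    (hg : Integrable g μ) (hgs : support g ⊆ s) :
    |∫ y, T y * g y ∂μ| ≤ (⨆ y : s, |T y|) * ∫ y, |g y| ∂μ := by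
  rw [← norm_eq_abs, ← integral_const_mul (⨆ y : s, |T y|)]
  refine norm_integral_le_of_norm_le (hg.abs.const_mul _) (ae_of_all _ fun y => ?_)
  rw [norm_mul, norm_eq_abs, norm_eq_abs]
  by_cases hy : g y = 0
  · simp [hy]
  · exact mul_le_mul_of_nonneg_right (le_ciSup hT ⟨y, hgs hy⟩) (abs_nonneg _)

lemma ContDiff.setIntegral_Iic_deriv {φ : ℝ → ℝ} (hφ : ContDiff ℝ 1 φ)
    (hφc : HasCompactSupport φ) (x : ℝ) : ∫ y in Iic x, deriv φ y = φ x := by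
  have hftc := integral_Iic_of_hasDerivAt_of_tendsto (a := x) (m := 0)
    hφ.continuous.continuousWithinAt
    (fun y _ => (hφ.differentiable one_ne_zero y).hasDerivAt)
    ((hφ.continuous_deriv le_rfl).integrable_of_hasCompactSupport hφc.deriv).integrableOn
    (hφc.is_zero_at_infty.mono_left atBot_le_cocompact)
  rwa [sub_zero] at hftc

section TailFormula

variable (m : Measure ℝ) {h : ℝ → ℝ} {c : ℝ}

lemma integrable_indicator_snd_le_fst [IsFiniteMeasure m] (hh : Integrable h) :
    Integrable ({p : ℝ × ℝ | p.2 ≤ p.1}.indicator fun p => h p.2) (m.prod volume) :=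
  (hh.comp_snd m).indicator (measurableSet_le measurable_snd measurable_fst)

lemma integral_indicator_snd_le_fst_left (y : ℝ) :
    ∫ x, {p : ℝ × ℝ | p.2 ≤ p.1}.indicator (fun p => h p.2) (x, y) ∂m = m.real (Ici y) * h y := by
  have hfiber : (fun x => {p : ℝ × ℝ | p.2 ≤ p.1}.indicator (fun p => h p.2) (x, y)) =
      (Ici y).indicator fun _ => h y := rfl
  rw [hfiber, integral_indicator_const _ measurableSet_Ici, smul_eq_mul]

lemma integrable_measureReal_Ici_mul [IsFiniteMeasure m] (hh : Integrable h) :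
    Integrable fun y => m.real (Ici y) * h y := by
  simpa only [integral_indicator_snd_le_fst_left] using
    (integrable_indicator_snd_le_fst m hh).integral_prod_right

lemma integral_setIntegral_Iic_eq_integral_measureReal_Ici_mul [IsFiniteMeasure m]
    (hh : Integrable h) :
    ∫ x, (∫ y in Iic x, h y) ∂m = ∫ y, m.real (Ici y) * h y := by
  have hfiber : ∀ x, ∫ y in Iic x, h y =
      ∫ y, {p : ℝ × ℝ | p.2 ≤ p.1}.indicator (fun p => h p.2) (x, y) := fun x => by
    rw [← integral_indicator measurableSet_Iic]
    rfl
  simp_rw [hfiber]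
  rw [integral_integral_swap
    (f := fun x y => {p : ℝ × ℝ | p.2 ≤ p.1}.indicator (fun p => h p.2) (x, y))
    (integrable_indicator_snd_le_fst m hh)]
  simp_rw [integral_indicator_snd_le_fst_left]

lemma measureReal_restrict_Ici_mul (hs : support h ⊆ Ici c) (y : ℝ) :
    (m.restrict (Ici c)).real (Ici y) * h y = m.real (Ici y) * h y := by
  by_cases hy : c ≤ y
  · rw [measureReal_restrict_apply measurableSet_Ici,
      inter_eq_self_of_subset_left (Ici_subset_Ici.2 hy)]
  · rw [notMem_support.1 fun hy' => hy (hs hy'), mul_zero, mul_zero]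

lemma integrable_measureReal_Ici_mul_of_support_subset (hm : m (Ici c) ≠ ⊤)
    (hh : Integrable h) (hs : support h ⊆ Ici c) :
    Integrable fun y => m.real (Ici y) * h y := by
  have : IsFiniteMeasure (m.restrict (Ici c)) := isFiniteMeasure_restrict.2 hm
  simpa only [measureReal_restrict_Ici_mul m hs] using
    integrable_measureReal_Ici_mul (m.restrict (Ici c)) hh

lemma integral_setIntegral_Iic_eq_integral_measureReal_Ici_mul_of_support_subset
    (hm : m (Ici c) ≠ ⊤) (hh : Integrable h) (hs : support h ⊆ Ici c) :
    ∫ x, (∫ y in Iic x, h y) ∂m = ∫ y, m.real (Ici y) * h y := by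
  have : IsFiniteMeasure (m.restrict (Ici c)) := isFiniteMeasure_restrict.2 hm
  have hvanish : ∀ x ∉ Ici c, ∫ y in Iic x, h y = 0 := fun x hx =>
    setIntegral_eq_zero_of_forall_eq_zero fun y hy =>
      notMem_support.1 fun hy' => hx (le_trans (mem_Ici.1 (hs hy')) hy)
  rw [← setIntegral_eq_integral_of_forall_compl_eq_zero hvanish,
    integral_setIntegral_Iic_eq_integral_measureReal_Ici_mul _ hh]
  simp_rw [measureReal_restrict_Ici_mul m hs]

lemma integral_eq_integral_measureReal_Ici_mul_deriv (hm : m (Ici c) ≠ ⊤) {φ : ℝ → ℝ}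
    (hφ : ContDiff ℝ 1 φ) (hφc : HasCompactSupport φ) (hs : support (deriv φ) ⊆ Ici c) :
    ∫ x, φ x ∂m = ∫ y, m.real (Ici y) * deriv φ y := by
  calc ∫ x, φ x ∂m = ∫ x, (∫ y in Iic x, deriv φ y) ∂m := by
        simp only [hφ.setIntegral_Iic_deriv hφc]
    _ = ∫ y, m.real (Ici y) * deriv φ y :=
        integral_setIntegral_Iic_eq_integral_measureReal_Ici_mul_of_support_subset m hm
          ((hφ.continuous_deriv le_rfl).integrable_of_hasCompactSupport hφc.deriv) hs

end TailFormula

lemma bddAbove_abs_measureReal_Ici_sub (a : ℝ) {μ ν : Measure ℝ} {c : ℝ} {s : Set ℝ}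
    (hμ : μ (Ici c) ≠ ⊤) (hν : ν (Ici c) ≠ ⊤) (hs : s ⊆ Ici c) :
    BddAbove (range fun y : s => |a * μ.real (Ici y) - ν.real (Ici y)|) := by
  refine ⟨|a| * μ.real (Ici c) + ν.real (Ici c), ?_⟩
  rintro _ ⟨⟨y, hy⟩, rfl⟩
  have hsub : Ici y ⊆ Ici c := Ici_subset_Ici.2 (hs hy)
  calc |a * μ.real (Ici y) - ν.real (Ici y)| ≤ |a| * μ.real (Ici y) + ν.real (Ici y) := by
        have := abs_sub (a * μ.real (Ici y)) (ν.real (Ici y))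
        rwa [abs_mul, abs_of_nonneg measureReal_nonneg, abs_of_nonneg measureReal_nonneg] at this
    _ ≤ |a| * μ.real (Ici c) + ν.real (Ici c) := by gcongr

theorem smalltime_section2_inequality_general (μ ν : Measure ℝ) [IsProbabilityMeasure μ]
    (c d : ℝ)
    (hν : ν (Ici c) < ⊤)
    (φ : ℝ → ℝ) (hφ : ContDiff ℝ 1 φ)
    (hsupp : Function.support φ ⊆ Icc c d) :
    ∀ Δ : ℝ, 0 < Δ →
      |(1 / Δ) * ∫ x, φ x ∂μ - ∫ x, φ x ∂ν| ≤
        ((⨆ x : ℝ, |φ x|) + ∫ y : ℝ, |deriv φ y|) *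
          ⨆ y : Icc c d, |(1 / Δ) * (μ (Ici (y : ℝ))).toReal - (ν (Ici (y : ℝ))).toReal| := by
  intro Δ _
  have htsupp : tsupport φ ⊆ Icc c d := closure_minimal hsupp isClosed_Icc
  have hφc : HasCompactSupport φ := isCompact_Icc.of_isClosed_subset (isClosed_tsupport φ) htsupp
  have hφ' : Integrable (deriv φ) :=
    (hφ.continuous_deriv le_rfl).integrable_of_hasCompactSupport hφc.deriv
  have hsupp' : support (deriv φ) ⊆ Icc c d := support_deriv_subset.trans htsupp
  have hs : support (deriv φ) ⊆ Ici c := hsupp'.trans Icc_subset_Ici_self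
  have hμ : μ (Ici c) ≠ ⊤ := measure_ne_top μ _
  have htail : (1 / Δ) * ∫ x, φ x ∂μ - ∫ x, φ x ∂ν =
      ∫ y, ((1 / Δ) * μ.real (Ici y) - ν.real (Ici y)) * deriv φ y := by
    rw [integral_eq_integral_measureReal_Ici_mul_deriv μ hμ hφ hφc hs,
      integral_eq_integral_measureReal_Ici_mul_deriv ν hν.ne hφ hφc hs, ← integral_const_mul,
      ← integral_sub ((integrable_measureReal_Ici_mul_of_support_subset μ hμ hφ' hs).const_mul _)
        (integrable_measureReal_Ici_mul_of_support_subset ν hν.ne hφ' hs)]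
    simp only [sub_mul, mul_assoc]
  simp only [← measureReal_def, htail]
  calc _ ≤ (⨆ y : Icc c d, |(1 / Δ) * μ.real (Ici y) - ν.real (Ici y)|) * ∫ y, |deriv φ y| :=
        abs_integral_mul_le_iSup_abs_mul_integral_abs
          (bddAbove_abs_measureReal_Ici_sub _ hμ hν.ne Icc_subset_Ici_self) hφ' hsupp'
    _ ≤ _ := by
        rw [mul_comm]
        gcongr
        · exact Real.iSup_nonneg fun _ => abs_nonneg _
        · exact le_add_of_nonneg_left (Real.iSup_nonneg fun _ => abs_nonneg _)

theorem smalltime_section2_inequality (μ ν : Measure ℝ) [IsProbabilityMeasure μ]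
    (c d : ℝ) (hc : 0 < c) (hcd : c < d)
    (hν : ν (Ici c) < ⊤)
    (φ : ℝ → ℝ) (hφ : ContDiff ℝ 1 φ)
    (hsupp : Function.support φ ⊆ Icc c d) :
    ∀ Δ : ℝ, 0 < Δ →
      |(1 / Δ) * ∫ x, φ x ∂μ - ∫ x, φ x ∂ν| ≤
        ((⨆ x : ℝ, |φ x|) + ∫ y : ℝ, |deriv φ y|) *
          ⨆ y : Icc c d, |(1 / Δ) * (μ (Ici (y : ℝ))).toReal - (ν (Ici (y : ℝ))).toReal| :=
  smalltime_section2_inequality_general μ ν c d hν φ hφ hsupp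
end
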